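/- arXiv:0805.1859 — 2 statements merged into one kernel-verified Lean document; each statement's English description precedes it below -/
import Mathlib

section
/- Let T be a dense triplet set. An SN-set S of T is a CandidateTBR SN-set (i.e., T|S is consistent with some phylogenetic tree) if and only if either |S| = 1, or S has exactly two maximal proper SN-subsets (the SN-sets of T|S maximal under the restriction of being nontrivial subsets of S), and both of them are CandidateTBR SN-sets. -/
/-!
Common definitions for formalizing "Constructing the Simplest Possible
Phylogenetic Network from Triplets" (van Iersel, Kelk).

A directed graph on a vertex type `V` is given by its arc set `A : Set (V × V)`.
-/

namespace Phylo

variable {V L : Type}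

/-- In-degree of a vertex. -/
noncomputable def indeg (A : Set (V × V)) (v : V) : ℕ := {u | (u, v) ∈ A}.ncard

/-- Out-degree of a vertex. -/
noncomputable def outdeg (A : Set (V × V)) (v : V) : ℕ := {w | (v, w) ∈ A}.ncard

/-- The root: indegree 0 and outdegree 2. -/
def IsRoot (A : Set (V × V)) (v : V) : Prop := indeg A v = 0 ∧ outdeg A v = 2

/-- A split vertex: indegree 1 and outdegree 2. -/
def IsSplit (A : Set (V × V)) (v : V) : Prop := indeg A v = 1 ∧ outdeg A v = 2

/-- A reticulation vertex: indegree 2 and outdegree 1. -/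
def IsRetic (A : Set (V × V)) (v : V) : Prop := indeg A v = 2 ∧ outdeg A v = 1

/-- A leaf vertex: indegree 1 and outdegree 0. -/
def IsLeafV (A : Set (V × V)) (v : V) : Prop := indeg A v = 1 ∧ outdeg A v = 0

/-- Directed reachability (reflexive-transitive closure of the arc relation). -/
def Reaches (A : Set (V × V)) : V → V → Prop :=
  Relation.ReflTransGen fun u v => (u, v) ∈ A

/-- A directed graph is acyclic if it has no directed cycle. -/
def Acyclic (A : Set (V × V)) : Prop := ∀ u v, (u, v) ∈ A → ¬ Reaches A v u

/-- Adjacency in the underlying undirected graph. -/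
def UAdj (A : Set (V × V)) (u v : V) : Prop := (u, v) ∈ A ∨ (v, u) ∈ A

/-- The underlying undirected graph is connected (on all of `V`). -/
def ConnectedGraph (A : Set (V × V)) : Prop :=
  ∀ u v : V, Relation.ReflTransGen (UAdj A) u v

/-- Undirected connectivity within a set `S` of vertices (in the induced subgraph). -/
def ConnWithin (A : Set (V × V)) (S : Set V) : Prop :=
  ∀ u ∈ S, ∀ v ∈ S, Relation.ReflTransGen (fun a b => a ∈ S ∧ b ∈ S ∧ UAdj A a b) u v

/-- A set of at least two vertices inducing a biconnected subgraph: it is connected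
and stays connected after removal of any single vertex. -/
def Biconnected (A : Set (V × V)) (S : Set V) : Prop :=
  2 ≤ S.ncard ∧ ConnWithin A S ∧ ∀ w ∈ S, ConnWithin A (S \ {w})

/-- A biconnected component: a maximal biconnected subgraph. -/
def BiconnComp (A : Set (V × V)) (S : Set V) : Prop :=
  Biconnected A S ∧ ∀ S', Biconnected A S' → S ⊆ S' → S' = S

/-- The arcs leaving a set of vertices. -/
def outArcs (A : Set (V × V)) (S : Set V) : Set (V × V) :=
  {a ∈ A | a.1 ∈ S ∧ a.2 ∉ S}

/-- A phylogenetic network on the (finite) vertex type `V` with leaves labelled by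
elements of `L`: a directed acyclic graph with exactly one vertex of indegree 0
and outdegree 2 (the root), all other vertices being split vertices, reticulation
vertices or leaves; leaves are distinctly labelled.  Moreover (to avoid redundant
networks) every nontrivial biconnected component has at least three outgoing arcs. -/
structure PhyloNetwork (V L : Type) : Type where
  vfin : Finite V
  arcs : Set (V × V)
  lab : V → L
  acyclic : Acyclic arcs
  root_ex : ∃ r, IsRoot arcs r
  root_unique : ∀ r r', IsRoot arcs r → IsRoot arcs r' → r = r'
  vertex_type : ∀ v, IsRoot arcs v ∨ IsSplit arcs v ∨ IsRetic arcs v ∨ IsLeafV arcs v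
  lab_inj : ∀ u v, IsLeafV arcs u → IsLeafV arcs v → lab u = lab v → u = v
  bicomp_out : ∀ S, BiconnComp arcs S → S.ncard ≠ 2 → 3 ≤ (outArcs arcs S).ncard

/-- The set of leaf labels of a network. -/
def leafSet (N : PhyloNetwork V L) : Set L := {x | ∃ v, IsLeafV N.arcs v ∧ N.lab v = x}

/-- A directed path, as a nonempty list of distinct vertices consecutively joined by arcs. -/
def IsPath (A : Set (V × V)) (l : List V) : Prop :=
  l ≠ [] ∧ l.Nodup ∧ l.Chain' fun a b => (a, b) ∈ A

/-- A directed path from `u` to `v`. -/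
def IsPathFromTo (A : Set (V × V)) (l : List V) (u v : V) : Prop :=
  IsPath A l ∧ l.head? = some u ∧ l.getLast? = some v

/-- `w` is an endpoint of the path `l`. -/
def IsEndpoint (l : List V) (w : V) : Prop := l.head? = some w ∨ l.getLast? = some w

/-- Two paths are internally vertex-disjoint: any common vertex is an endpoint of both. -/
def IntDisjoint (p q : List V) : Prop :=
  ∀ w, w ∈ p → w ∈ q → IsEndpoint p w ∧ IsEndpoint q w

/-- An embedding of the triplet `xy|z` with summit `p` and cherry vertex `q`:
pairwise internally vertex-disjoint directed paths `q→x`, `q→y`, `p→q`, `p→z`. -/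
def HasEmbedding (A : Set (V × V)) (p q x y z : V) : Prop :=
  p ≠ q ∧ ∃ Pqx Pqy Ppq Ppz : List V,
    IsPathFromTo A Pqx q x ∧ IsPathFromTo A Pqy q y ∧
    IsPathFromTo A Ppq p q ∧ IsPathFromTo A Ppz p z ∧
    IntDisjoint Pqx Pqy ∧ IntDisjoint Pqx Ppq ∧ IntDisjoint Pqx Ppz ∧
    IntDisjoint Pqy Ppq ∧ IntDisjoint Pqy Ppz ∧ IntDisjoint Ppq Ppz

/-- The triplet `xy|z` (on leaf labels) is consistent with the network `N`. -/
def ConsistentT (N : PhyloNetwork V L) (x y z : L) : Prop :=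
  ∃ a b c : V, IsLeafV N.arcs a ∧ IsLeafV N.arcs b ∧ IsLeafV N.arcs c ∧
    N.lab a = x ∧ N.lab b = y ∧ N.lab c = z ∧ a ≠ b ∧ a ≠ c ∧ b ≠ c ∧
    ∃ p q, HasEmbedding N.arcs p q a b c

/-- `T(N)`: the set of all triplets consistent with `N`
(the triple `(x,y,z)` codes the triplet `xy|z`). -/
def TN (N : PhyloNetwork V L) : Set (L × L × L) := {t | ConsistentT N t.1 t.2.1 t.2.2}

/-- `N` is consistent with every triplet in `T`. -/
def ConsistentSet (N : PhyloNetwork V L) (T : Set (L × L × L)) : Prop :=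
  ∀ t ∈ T, ConsistentT N t.1 t.2.1 t.2.2

/-- `N` reflects `T` if `T(N) = T`. -/
def Reflects (N : PhyloNetwork V L) (T : Set (L × L × L)) : Prop := TN N = T

/-- `L(T)`: the set of leaves occurring in a triplet set. -/
def tripletLeaves (T : Set (L × L × L)) : Set L :=
  {x | ∃ t ∈ T, x = t.1 ∨ x = t.2.1 ∨ x = t.2.2}

/-- `T` is a well-formed triplet set: in each triplet the three leaves are distinct, and
the coding is invariant under swapping the first two coordinates (`xy|z = yx|z`). -/
def IsTripletSet (T : Set (L × L × L)) : Prop :=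
  ∀ t ∈ T, (t.2.1, t.1, t.2.2) ∈ T ∧ t.1 ≠ t.2.1 ∧ t.1 ≠ t.2.2 ∧ t.2.1 ≠ t.2.2

/-- `T` is dense: for any three distinct leaves at least one triplet on them is present. -/
def DenseT (T : Set (L × L × L)) : Prop :=
  ∀ x ∈ tripletLeaves T, ∀ y ∈ tripletLeaves T, ∀ z ∈ tripletLeaves T,
    x ≠ y → x ≠ z → y ≠ z → (x, y, z) ∈ T ∨ (x, z, y) ∈ T ∨ (y, z, x) ∈ T

/-- `S` is an SN-set of `T` with respect to the leaf set `U`: `S ⊆ U` and there is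
no triplet `xy|z ∈ T` with `x, z ∈ S` and `y ∉ S`. -/
def SNSetOn (T : Set (L × L × L)) (U S : Set L) : Prop :=
  S ⊆ U ∧ ¬ ∃ x y z, (x, y, z) ∈ T ∧ x ∈ S ∧ z ∈ S ∧ y ∉ S

/-- `S` is an SN-set of `T`. -/
def SNSet (T : Set (L × L × L)) (S : Set L) : Prop := SNSetOn T (tripletLeaves T) S

/-- `S` is a maximal SN-set: a nontrivial SN-set not strictly contained
in any nontrivial SN-set. -/
def MaxSNSet (T : Set (L × L × L)) (S : Set L) : Prop :=
  SNSet T S ∧ S ≠ tripletLeaves T ∧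
    ∀ S', SNSet T S' → S' ≠ tripletLeaves T → S ⊆ S' → S' = S

/-- `S` is an SN-set maximal under the restriction of not containing `B`. -/
def MaxSNAvoid (T : Set (L × L × L)) (B S : Set L) : Prop :=
  SNSet T S ∧ ¬ B ⊆ S ∧ ∀ S', SNSet T S' → ¬ B ⊆ S' → S ⊆ S' → S' = S

/-- `T|S`: the triplets of `T` all of whose leaves lie in `S`. -/
def restrictT (T : Set (L × L × L)) (S : Set L) : Set (L × L × L) :=
  {t ∈ T | t.1 ∈ S ∧ t.2.1 ∈ S ∧ t.2.2 ∈ S}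

/-- A cut-arc: an arc whose removal disconnects the underlying undirected graph. -/
def CutArc (A : Set (V × V)) (a : V × V) : Prop :=
  a ∈ A ∧ ¬ ConnectedGraph (A \ {a})

/-- A simple network: it contains a reticulation vertex and all its cut-arcs are
trivial (i.e. end in a leaf). -/
def SimpleNet (N : PhyloNetwork V L) : Prop :=
  (∃ v, IsRetic N.arcs v) ∧ ∀ a, CutArc N.arcs a → IsLeafV N.arcs a.2

/-- A level-`k` network: every biconnected component contains at most `k`
reticulation vertices. -/
def IsLevel (N : PhyloNetwork V L) (k : ℕ) : Prop :=
  ∀ S, BiconnComp N.arcs S → {v ∈ S | IsRetic N.arcs v}.ncard ≤ k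

/-- The total number of reticulation vertices of a network. -/
noncomputable def numRetic (N : PhyloNetwork V L) : ℕ := {v | IsRetic N.arcs v}.ncard

/-- The level of a network: the smallest `k` such that it is a level-`k` network. -/
noncomputable def netLevel (N : PhyloNetwork V L) : ℕ := sInf {k | IsLevel N k}

/-- A highest cut-arc: a cut-arc not reachable from any other cut-arc. -/
def HighestCutArc (A : Set (V × V)) (a : V × V) : Prop :=
  CutArc A a ∧ ∀ b, CutArc A b → b ≠ a → ¬ Reaches A b.2 a.1

/-- The set of leaf labels below a vertex `v`. -/
def leavesBelowV (N : PhyloNetwork V L) (v : V) : Set L :=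
  {x | ∃ w, IsLeafV N.arcs w ∧ Reaches N.arcs v w ∧ N.lab w = x}

/-- An (undirected) cycle in the underlying undirected graph, as a list of at least
three distinct vertices that are consecutively adjacent, the last being adjacent
to the first. -/
def IsUCycle (A : Set (V × V)) (l : List V) : Prop :=
  3 ≤ l.length ∧ l.Nodup ∧ l.Chain' (UAdj A) ∧
    ∃ u w, l.head? = some u ∧ l.getLast? = some w ∧ UAdj A w u

/-- A highest reticulation: a reticulation lying on a cycle through the root. -/
def HighestRetic (N : PhyloNetwork V L) (r : V) : Prop :=
  IsRetic N.arcs r ∧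
    ∃ c, IsUCycle N.arcs c ∧ r ∈ c ∧ ∃ rt, IsRoot N.arcs rt ∧ rt ∈ c

/-- `BHR(N)`: the set of leaves below a highest reticulation. -/
def BHR (N : PhyloNetwork V L) : Set L :=
  {x | ∃ r, HighestRetic N r ∧ x ∈ leavesBelowV N r}

/-- The collection of sets of leaves below the highest cut-arcs of `N`. -/
def highCutArcLeafSets (N : PhyloNetwork V L) : Set (Set L) :=
  {S | ∃ a, HighestCutArc N.arcs a ∧ S = leavesBelowV N a.2}

/-- `CutInduce(N,T)`: the induced triplet set on the sets of leaves below the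
highest cut-arcs of `N`. -/
def CutInduce (N : PhyloNetwork V L) (T : Set (L × L × L)) :
    Set (Set L × Set L × Set L) :=
  {t | t.1 ∈ highCutArcLeafSets N ∧ t.2.1 ∈ highCutArcLeafSets N ∧
       t.2.2 ∈ highCutArcLeafSets N ∧
       t.1 ≠ t.2.1 ∧ t.1 ≠ t.2.2 ∧ t.2.1 ≠ t.2.2 ∧
       ∃ x ∈ t.1, ∃ y ∈ t.2.1, ∃ z ∈ t.2.2, (x, y, z) ∈ T}

/-- `T ∇ C`: the triplet set induced by a collection `C` of leaf sets. -/
def TInduced (T : Set (L × L × L)) (C : Set (Set L)) : Set (Set L × Set L × Set L) :=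
  {t | t.1 ∈ C ∧ t.2.1 ∈ C ∧ t.2.2 ∈ C ∧
       t.1 ≠ t.2.1 ∧ t.1 ≠ t.2.2 ∧ t.2.1 ≠ t.2.2 ∧
       ∃ x ∈ t.1, ∃ y ∈ t.2.1, ∃ z ∈ t.2.2, (x, y, z) ∈ T}

/-- A label-preserving isomorphism of networks. -/
def NetIso {V₁ V₂ L : Type} (N₁ : PhyloNetwork V₁ L) (N₂ : PhyloNetwork V₂ L) : Prop :=
  ∃ e : V₁ ≃ V₂, (∀ u v : V₁, (u, v) ∈ N₁.arcs ↔ (e u, e v) ∈ N₂.arcs) ∧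
    ∀ v, IsLeafV N₁.arcs v → N₂.lab (e v) = N₁.lab v

/-- A (rooted, binary) phylogenetic tree given by its arc set: acyclic, a unique
vertex of indegree 0, every vertex of indegree at most 1 and outdegree 0 or 2.
(The single-vertex tree is allowed.) -/
def IsTreeArcs (A : Set (V × V)) : Prop :=
  Acyclic A ∧ (∃! r, indeg A r = 0) ∧ (∀ v, indeg A v ≤ 1) ∧
    ∀ v, outdeg A v = 0 ∨ outdeg A v = 2

/-- The leaf labels of a tree (leaves are the vertices of outdegree 0). -/
def treeLeafSet (A : Set (V × V)) (lab : V → L) : Set L :=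
  {x | ∃ v, outdeg A v = 0 ∧ lab v = x}

/-- The triplet `xy|z` is consistent with the tree given by `A` and labelling `lab`. -/
def TreeConsistentTriplet (A : Set (V × V)) (lab : V → L) (x y z : L) : Prop :=
  ∃ a b c : V, outdeg A a = 0 ∧ outdeg A b = 0 ∧ outdeg A c = 0 ∧
    lab a = x ∧ lab b = y ∧ lab c = z ∧ a ≠ b ∧ a ≠ c ∧ b ≠ c ∧
    ∃ p q, HasEmbedding A p q a b c

/-- A CandidateTBR SN-set: an SN-set `S` of `T` such that `T|S` is consistent with
some phylogenetic tree on the leaf set `S`. -/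
def CandidateTBR (T : Set (L × L × L)) (S : Set L) : Prop :=
  SNSet T S ∧ ∃ (V : Type) (_ : Finite V) (A : Set (V × V)) (lab : V → L),
    IsTreeArcs A ∧
    (∀ u v, outdeg A u = 0 → outdeg A v = 0 → lab u = lab v → u = v) ∧
    treeLeafSet A lab = S ∧
    ∀ t ∈ restrictT T S, TreeConsistentTriplet A lab t.1 t.2.1 t.2.2

/-- `S'` is an SN-set of `T|S` (with leaf set `S`) that is maximal under the
restriction of being a nontrivial (proper) subset of `S`. -/
def MaxProperSN (T : Set (L × L × L)) (S S' : Set L) : Prop :=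
  SNSetOn (restrictT T S) S S' ∧ S' ≠ S ∧
    ∀ S'', SNSetOn (restrictT T S) S S'' → S'' ≠ S → S' ⊆ S'' → S'' = S'

/-!
A triplet `xy|z` is displayed by a tree exactly when some cluster (the leaves below a vertex)
contains `x` and `y` but not `z`. In a tree displaying `T|S`, the clusters `S₁`, `S₂` of the two
children of the root therefore split `S` so that no triplet of `T|S` has its cherry across the
split; by density every proper SN-subset of `T|S` lies on one side, so `S₁` and `S₂` are exactly
the two maximal ones, and the subtrees below the children display `T|S₁` and `T|S₂`.

Conversely, two maximal SN-subsets of a dense triplet set are disjoint, and they cover `S` because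
singletons are SN-sets. The SN-property then forces every triplet of `T|S` either to lie inside one
side or to have its cherry on one side and its outgroup on the other, and all of these are
displayed by the tree that hangs the trees for `T|S₁` and `T|S₂` below a new root.
-/

section Digraph

variable {A : Set (V × V)} {u v w : V}

lemma wellFounded_of_irrefl_transGen [Finite V] {r : V → V → Prop}
    (h : ∀ v, ¬ Relation.TransGen r v v) : WellFounded r :=
  have : Std.Irrefl (Relation.TransGen r) := ⟨h⟩
  Subrelation.wf Relation.TransGen.single (Finite.wellFounded_of_trans_of_irrefl _)

lemma Acyclic.not_transGen (hA : Acyclic A) (v : V) :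
    ¬ Relation.TransGen (fun u v => (u, v) ∈ A) v v := fun h => by
  obtain ⟨w, hvw, hwv⟩ := Relation.TransGen.head'_iff.mp h
  exact hA v w hvw hwv

lemma Acyclic.wellFounded_parent [Finite V] (hA : Acyclic A) :
    WellFounded fun u v => (u, v) ∈ A :=
  wellFounded_of_irrefl_transGen hA.not_transGen

lemma Acyclic.wellFounded_child [Finite V] (hA : Acyclic A) :
    WellFounded fun u v => (v, u) ∈ A :=
  wellFounded_of_irrefl_transGen fun v h => hA.not_transGen v (Relation.transGen_swap.mp h)

lemma Acyclic.eq_of_reaches (hA : Acyclic A) (huv : Reaches A u v) (hvu : Reaches A v u) :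
    u = v := by
  rcases Relation.ReflTransGen.cases_head huv with rfl | ⟨w, huw, hwv⟩
  · rfl
  · exact absurd (hwv.trans hvu) (hA u w huw)

lemma outdeg_eq_zero_iff [Finite V] : outdeg A v = 0 ↔ ∀ w, (v, w) ∉ A := by
  simp [outdeg, Set.ncard_eq_zero (Set.toFinite _), Set.eq_empty_iff_forall_notMem]

lemma indeg_eq_zero_iff [Finite V] : indeg A v = 0 ↔ ∀ u, (u, v) ∉ A := by
  simp [indeg, Set.ncard_eq_zero (Set.toFinite _), Set.eq_empty_iff_forall_notMem]

lemma indeg_le_one_iff [Finite V] :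
    indeg A v ≤ 1 ↔ ∀ u, (u, v) ∈ A → ∀ w, (w, v) ∈ A → u = w := by
  simp only [indeg, Set.ncard_le_one (Set.toFinite _), Set.mem_ofPred_eq]

lemma eq_of_reaches_of_outdeg_eq_zero [Finite V] (hv : outdeg A v = 0) (h : Reaches A v w) :
    v = w := by
  rcases Relation.ReflTransGen.cases_head h with h | ⟨u, hvu, -⟩
  · exact h
  · exact absurd hvu (outdeg_eq_zero_iff.mp hv u)

lemma Acyclic.exists_reaches_outdeg_eq_zero [Finite V] (hA : Acyclic A) (u : V) :
    ∃ v, Reaches A u v ∧ outdeg A v = 0 := by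
  obtain ⟨v, huv, hmin⟩ := hA.wellFounded_child.has_min {v | Reaches A u v} ⟨u, .refl⟩
  exact ⟨v, huv, outdeg_eq_zero_iff.mpr fun w hvw => hmin w (huv.tail hvw) hvw⟩

lemma isTreeArcs_iff [Finite V] :
    IsTreeArcs A ↔ Acyclic A ∧ (∃! r, ∀ u, (u, r) ∉ A) ∧
      (∀ v u, (u, v) ∈ A → ∀ w, (w, v) ∈ A → u = w) ∧
      ∀ v, outdeg A v = 0 ∨ outdeg A v = 2 := by
  simp only [IsTreeArcs, indeg_eq_zero_iff, indeg_le_one_iff]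

end Digraph

section Paths

variable {A : Set (V × V)} {l : List V} {u v x : V}

lemma IsPathFromTo.reaches_of_mem (h : IsPathFromTo A l u v) (hx : x ∈ l) :
    Reaches A u x ∧ Reaches A x v := by
  obtain ⟨⟨-, -, hchain⟩, hu, hv⟩ := h
  exact ⟨hchain.induction (Reaches A u) _ (fun _ _ h hu => hu.tail h)
      (fun hl => (List.head_eq_iff_head?_eq_some hl).mpr hu ▸ .refl) x hx,
    hchain.backwards_induction (Reaches A · v) _ (fun _ _ h hv => hv.head h)
      (fun _ => List.getLast_of_mem_getLast? hv ▸ .refl) x hx⟩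

lemma IsPathFromTo.reaches (h : IsPathFromTo A l u v) : Reaches A u v :=
  (h.reaches_of_mem (List.mem_of_mem_head? h.2.1)).2

lemma Acyclic.exists_isPathFromTo (hA : Acyclic A) (h : Reaches A u v) :
    ∃ l, IsPathFromTo A l u v := by
  induction h using Relation.ReflTransGen.head_induction_on with
  | refl => exact ⟨[v], ⟨by simp, by simp, List.isChain_singleton v⟩, rfl, rfl⟩
  | @head a c hac _ ih =>
    obtain ⟨l, hl⟩ := ih
    obtain ⟨t, rfl⟩ := List.head?_eq_some_iff.mp hl.2.1
    refine ⟨a :: c :: t, ⟨by simp, ?_, List.isChain_cons_cons.mpr ⟨hac, hl.1.2.2⟩⟩,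
      rfl, ?_⟩
    · exact List.nodup_cons.mpr ⟨fun ha => hA a c hac (hl.reaches_of_mem ha).1, hl.1.2.1⟩
    · simpa using hl.2.2

lemma IntDisjoint.of_forall_eq {p q : List V} (h : ∀ w ∈ p, w ∈ q → w = x)
    (hp : IsEndpoint p x) (hq : IsEndpoint q x) : IntDisjoint p q :=
  fun w h₁ h₂ => h w h₁ h₂ ▸ ⟨hp, hq⟩

end Paths

section Tree

variable [Finite V] {A : Set (V × V)} {a b c m p q r u v w x : V}

lemma IsTreeArcs.eq_of_mem_of_mem (hA : IsTreeArcs A) (hu : (u, v) ∈ A) (hw : (w, v) ∈ A) :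
    u = w :=
  (isTreeArcs_iff.mp hA).2.2.1 v u hu w hw

lemma IsTreeArcs.reaches_total (hA : IsTreeArcs A) (hu : Reaches A u x) (hv : Reaches A v x) :
    Reaches A u v ∨ Reaches A v u := by
  induction hu with
  | refl => exact .inr hv
  | @tail y x hy hyx ih =>
    rcases Relation.ReflTransGen.cases_tail hv with rfl | ⟨w, hvw, hwx⟩
    · exact .inl (hy.tail hyx)
    · exact ih (hA.eq_of_mem_of_mem hwx hyx ▸ hvw)

lemma IsTreeArcs.exists_root (hA : IsTreeArcs A) :
    ∃ r, (∀ u, (u, r) ∉ A) ∧ ∀ v, Reaches A r v := by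
  obtain ⟨r, hr, hr_unique⟩ := (isTreeArcs_iff.mp hA).2.1
  refine ⟨r, hr, fun v => ?_⟩
  obtain ⟨s, hsv, hmin⟩ := hA.1.wellFounded_parent.has_min {u | Reaches A u v} ⟨v, .refl⟩
  exact hr_unique s (fun u hus => hmin u (.head hus hsv) hus) ▸ hsv

lemma IsTreeArcs.exists_lca (hA : IsTreeArcs A) (hma : Reaches A m a) (hmb : Reaches A m b) :
    ∃ q, Reaches A q a ∧ Reaches A q b ∧
      ∀ w, Reaches A w a → Reaches A w b → Reaches A w q := by
  obtain ⟨q, ⟨hqa, hqb⟩, hmin⟩ :=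
    hA.1.wellFounded_child.has_min {w | Reaches A w a ∧ Reaches A w b} ⟨m, hma, hmb⟩
  refine ⟨q, hqa, hqb, fun w hwa hwb => ?_⟩
  rcases hA.reaches_total hwa hqa with hwq | hqw
  · exact hwq
  · rcases Relation.ReflTransGen.cases_head hqw with rfl | ⟨c, hqc, hcw⟩
    · exact .refl
    · exact absurd hqc (hmin c ⟨hcw.trans hwa, hcw.trans hwb⟩)

lemma IsTreeArcs.exists_parent (hA : IsTreeArcs A) (hr : ∀ u, (u, r) ∉ A)
    (hv : v ≠ r) : ∃ u, (u, v) ∈ A := by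
  by_contra h
  exact hv ((isTreeArcs_iff.mp hA).2.1.unique (fun u hu => h ⟨u, hu⟩) hr)

lemma IsTreeArcs.not_reaches_of_siblings {c₁ c₂ : V} (hA : IsTreeArcs A)
    (h₁ : (p, c₁) ∈ A) (h₂ : (p, c₂) ∈ A) (hne : c₁ ≠ c₂) : ¬ Reaches A c₁ c₂ := by
  intro h
  rcases Relation.ReflTransGen.cases_tail h with rfl | ⟨u, hc₁u, huc₂⟩
  · exact hne rfl
  · exact hA.1 p c₁ h₁ (hA.eq_of_mem_of_mem huc₂ h₂ ▸ hc₁u)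

lemma IsTreeArcs.mem_of_reaches_of_reaches {l : List V} (hA : IsTreeArcs A)
    (hl : IsPathFromTo A l p c) (hpq : Reaches A p q) (hqc : Reaches A q c) : q ∈ l := by
  induction l generalizing p with
  | nil => exact absurd rfl hl.1.1
  | cons a t ih =>
    obtain rfl : a = p := by simpa using hl.2.1
    by_cases hq : a = q
    · exact hq ▸ List.mem_cons_self
    cases t with
    | nil =>
      obtain rfl : a = c := by simpa using hl.2.2
      exact absurd (hA.1.eq_of_reaches hpq hqc) hq
    | cons b t =>
      have hab : (a, b) ∈ A := (List.isChain_cons_cons.mp hl.1.2.2).1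
      have hbc : IsPathFromTo A (b :: t) b c :=
        ⟨⟨by simp, (List.nodup_cons.mp hl.1.2.1).2, (List.isChain_cons_cons.mp hl.1.2.2).2⟩,
          rfl, by simpa using hl.2.2⟩
      refine List.mem_cons_of_mem _ (ih hbc ?_)
      rcases hA.reaches_total hqc hbc.reaches with hqb | hbq
      · rcases Relation.ReflTransGen.cases_tail hqb with rfl | ⟨u, hqu, hub⟩
        · exact .refl
        · obtain rfl := hA.eq_of_mem_of_mem hub hab
          exact absurd (hA.1.eq_of_reaches hpq hqu) hq
      · exact hbq

lemma IsTreeArcs.hasEmbedding_of_reaches (hA : IsTreeArcs A) (hma : Reaches A m a)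
    (hmb : Reaches A m b) (hmc : ¬ Reaches A m c) : ∃ p q, HasEmbedding A p q a b c := by
  obtain ⟨r, -, hr⟩ := hA.exists_root
  -- cherry vertex `q = lca(a, b)`, summit `p = lca(q, c)`
  obtain ⟨q, hqa, hqb, hq⟩ := hA.exists_lca hma hmb
  have hqc : ¬ Reaches A q c := fun h => hmc ((hq m hma hmb).trans h)
  obtain ⟨p, hpq, hpc, hp⟩ := hA.exists_lca (hr q) (hr c)
  obtain ⟨Pqa, hPqa⟩ := hA.1.exists_isPathFromTo hqa
  obtain ⟨Pqb, hPqb⟩ := hA.1.exists_isPathFromTo hqb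
  obtain ⟨Ppq, hPpq⟩ := hA.1.exists_isPathFromTo hpq
  obtain ⟨Ppc, hPpc⟩ := hA.1.exists_isPathFromTo hpc
  have below_q {P : List V} {x : V} (hP : IsPathFromTo A P q x) {w : V} (hw : w ∈ P)
      (hw' : w ∈ Ppq) : w = q :=
    hA.1.eq_of_reaches (hPpq.reaches_of_mem hw').2 (hP.reaches_of_mem hw).1
  have not_below_q {P : List V} {x : V} (hP : IsPathFromTo A P q x) :
      IntDisjoint P Ppc := fun w hw hw' =>
    absurd ((hP.reaches_of_mem hw).1.trans (hPpc.reaches_of_mem hw').2) hqc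
  refine ⟨p, q, fun h => hqc (h ▸ hpc), Pqa, Pqb, Ppq, Ppc, hPqa, hPqb, hPpq, hPpc,
    .of_forall_eq (fun w h₁ h₂ => hA.1.eq_of_reaches
      (hq w (hPqa.reaches_of_mem h₁).2 (hPqb.reaches_of_mem h₂).2) (hPqa.reaches_of_mem h₁).1)
      (.inl hPqa.2.1) (.inl hPqb.2.1),
    .of_forall_eq (fun w h₁ h₂ => below_q hPqa h₁ h₂) (.inl hPqa.2.1) (.inr hPpq.2.2),
    not_below_q hPqa,
    .of_forall_eq (fun w h₁ h₂ => below_q hPqb h₁ h₂) (.inl hPqb.2.1) (.inr hPpq.2.2),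
    not_below_q hPqb,
    .of_forall_eq (fun w h₁ h₂ => hA.1.eq_of_reaches
      (hp w (hPpq.reaches_of_mem h₁).2 (hPpc.reaches_of_mem h₂).2) (hPpq.reaches_of_mem h₁).1)
      (.inl hPpq.2.1) (.inl hPpc.2.1)⟩

lemma IsTreeArcs.exists_reaches_of_hasEmbedding (hA : IsTreeArcs A) (hc : outdeg A c = 0)
    (hac : a ≠ c) (h : HasEmbedding A p q a b c) :
    ∃ m, Reaches A m a ∧ Reaches A m b ∧ ¬ Reaches A m c := by
  obtain ⟨hpq, Pqa, Pqb, Ppq, Ppc, hPqa, hPqb, hPpq, hPpc, -, -, -, -, -, hdisj⟩ := h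
  refine ⟨q, hPqa.reaches, hPqb.reaches, fun hqc => ?_⟩
  have hq : q ∈ Ppc := hA.mem_of_reaches_of_reaches hPpc hPpq.reaches hqc
  rcases (hdisj q (List.mem_of_getLast? hPpq.2.2) hq).2 with h | h
  · exact hpq (Option.some_injective _ (hPpc.2.1.symm.trans h))
  · obtain rfl : c = q := Option.some_injective _ (hPpc.2.2.symm.trans h)
    exact hac (eq_of_reaches_of_outdeg_eq_zero hc hPqa.reaches).symm

end Tree

section Cluster

variable {A : Set (V × V)} {lab : V → L} {m m' r : V} {x y z : L}

def cluster (A : Set (V × V)) (lab : V → L) (m : V) : Set L :=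
  {x | ∃ w, outdeg A w = 0 ∧ Reaches A m w ∧ lab w = x}

def LeafInjective (A : Set (V × V)) (lab : V → L) : Prop :=
  ∀ u v, outdeg A u = 0 → outdeg A v = 0 → lab u = lab v → u = v

lemma cluster_subset_of_reaches (h : Reaches A m m') : cluster A lab m' ⊆ cluster A lab m :=
  fun _ ⟨w, hw, hm'w, hx⟩ => ⟨w, hw, h.trans hm'w, hx⟩

lemma cluster_subset_treeLeafSet : cluster A lab m ⊆ treeLeafSet A lab :=
  fun _ ⟨w, hw, _, hx⟩ => ⟨w, hw, hx⟩

lemma treeLeafSet_eq_cluster (hr : ∀ v, Reaches A r v) : treeLeafSet A lab = cluster A lab r :=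
  (cluster_subset_treeLeafSet).antisymm' fun _ ⟨w, hw, hx⟩ => ⟨w, hw, hr w, hx⟩

variable [Finite V]

lemma Acyclic.cluster_nonempty (hA : Acyclic A) (m : V) : (cluster A lab m).Nonempty :=
  let ⟨w, hmw, hw⟩ := hA.exists_reaches_outdeg_eq_zero m
  ⟨lab w, w, hw, hmw, rfl⟩

lemma treeLeafSet_eq_singleton (hr : ∀ v, Reaches A r v) (hr0 : outdeg A r = 0) :
    treeLeafSet A lab = {lab r} := by
  rw [treeLeafSet_eq_cluster hr]
  ext x
  constructor
  · rintro ⟨w, -, hrw, rfl⟩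
    rw [← eq_of_reaches_of_outdeg_eq_zero hr0 hrw]
    rfl
  · rintro rfl
    exact ⟨r, hr0, .refl, rfl⟩

lemma cluster_eq_union {c₁ c₂ : V} (hm : {w | (m, w) ∈ A} = {c₁, c₂}) :
    cluster A lab m = cluster A lab c₁ ∪ cluster A lab c₂ := by
  have hchild : ∀ c, (m, c) ∈ A ↔ c = c₁ ∨ c = c₂ := fun c => Set.ext_iff.mp hm c
  refine subset_antisymm ?_ (Set.union_subset
    (cluster_subset_of_reaches (.single ((hchild c₁).mpr (.inl rfl))))
    (cluster_subset_of_reaches (.single ((hchild c₂).mpr (.inr rfl)))))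
  rintro _ ⟨w, hw, hmw, rfl⟩
  rcases Relation.ReflTransGen.cases_head hmw with rfl | ⟨c, hmc, hcw⟩
  · exact absurd ((hchild c₁).mpr (.inl rfl)) (outdeg_eq_zero_iff.mp hw c₁)
  · rcases (hchild c).mp hmc with rfl | rfl
    · exact .inl ⟨w, hw, hcw, rfl⟩
    · exact .inr ⟨w, hw, hcw, rfl⟩

lemma IsTreeArcs.reaches_total_of_mem_cluster (hA : IsTreeArcs A) (hinj : LeafInjective A lab)
    (h : x ∈ cluster A lab m) (h' : x ∈ cluster A lab m') :
    Reaches A m m' ∨ Reaches A m' m := by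
  obtain ⟨w, hw, hmw, rfl⟩ := h
  obtain ⟨w', hw', hm'w', hlab⟩ := h'
  exact hA.reaches_total hmw (hinj w' w hw' hw hlab ▸ hm'w')

lemma IsTreeArcs.exists_cluster_of_treeConsistentTriplet (hA : IsTreeArcs A)
    (hinj : LeafInjective A lab) (h : TreeConsistentTriplet A lab x y z) :
    x ≠ y ∧ z ∈ treeLeafSet A lab ∧
      ∃ m, x ∈ cluster A lab m ∧ y ∈ cluster A lab m ∧ z ∉ cluster A lab m := by
  obtain ⟨a, b, c, ha, hb, hc, rfl, rfl, rfl, hab, hac, -, p, q, hpq⟩ := h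
  obtain ⟨m, hma, hmb, hmc⟩ := hA.exists_reaches_of_hasEmbedding hc hac hpq
  refine ⟨fun h => hab (hinj a b ha hb h), ⟨c, hc, rfl⟩, m, ⟨a, ha, hma, rfl⟩,
    ⟨b, hb, hmb, rfl⟩, ?_⟩
  rintro ⟨c', hc', hmc', hlab⟩
  exact hmc (hinj c' c hc' hc hlab ▸ hmc')

lemma IsTreeArcs.treeConsistentTriplet_of_cluster (hA : IsTreeArcs A) (hxy : x ≠ y)
    (hz : z ∈ treeLeafSet A lab) (hx : x ∈ cluster A lab m) (hy : y ∈ cluster A lab m)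
    (hzm : z ∉ cluster A lab m) : TreeConsistentTriplet A lab x y z := by
  obtain ⟨c, hc, rfl⟩ := hz
  obtain ⟨a, ha, hma, rfl⟩ := hx
  obtain ⟨b, hb, hmb, rfl⟩ := hy
  have hmc : ¬ Reaches A m c := fun h => hzm ⟨c, hc, h, rfl⟩
  exact ⟨a, b, c, ha, hb, hc, rfl, rfl, rfl, fun h => hxy (h ▸ rfl), fun h => hmc (h ▸ hma),
    fun h => hmc (h ▸ hmb), hA.hasEmbedding_of_reaches hma hmb hmc⟩

end Cluster

section Compatible

variable {T T' T'' : Set (L × L × L)} {S : Set L}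

def CompatibleOn (T' : Set (L × L × L)) (S : Set L) : Prop :=
  ∃ (V : Type) (_ : Finite V) (A : Set (V × V)) (lab : V → L), IsTreeArcs A ∧
    LeafInjective A lab ∧ treeLeafSet A lab = S ∧
    ∀ t ∈ T', TreeConsistentTriplet A lab t.1 t.2.1 t.2.2

lemma candidateTBR_iff : CandidateTBR T S ↔ SNSet T S ∧ CompatibleOn (restrictT T S) S :=
  Iff.rfl

lemma CompatibleOn.mono (h : CompatibleOn T' S) (hsub : T'' ⊆ T') : CompatibleOn T'' S :=
  let ⟨V, hV, A, lab, hA, hinj, hS, hT'⟩ := h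
  ⟨V, hV, A, lab, hA, hinj, hS, fun t ht => hT' t (hsub ht)⟩

lemma compatibleOn_singleton (x : L) : CompatibleOn ∅ {x} := by
  have hdeg : ∀ v : Unit, outdeg (∅ : Set (Unit × Unit)) v = 0 := fun _ =>
    outdeg_eq_zero_iff.mpr fun _ => id
  refine ⟨Unit, inferInstance, ∅, fun _ => x, isTreeArcs_iff.mpr
    ⟨fun _ _ h => h.elim, ⟨(), fun _ => id, fun _ _ => rfl⟩, fun _ _ h => h.elim,
      fun v => .inl (hdeg v)⟩, fun _ _ _ _ _ => rfl, ?_, fun _ h => h.elim⟩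
  ext y
  exact ⟨fun ⟨_, _, hy⟩ => hy.symm, fun hy => ⟨(), hdeg (), hy.symm⟩⟩

end Compatible

section Embedding

variable {W : Type} {A : Set (V × V)} {B : Set (W × W)} {f : V → W}
  {lab : V → L} {lab' : W → L} {u v w : V} {x y z : L}

structure IsOutClosedEmbedding (A : Set (V × V)) (B : Set (W × W)) (f : V → W) : Prop where
  injective : Function.Injective f
  mem_iff : ∀ u v, (f u, f v) ∈ B ↔ (u, v) ∈ A
  exists_eq_of_mem : ∀ u w, (f u, w) ∈ B → ∃ v, f v = w

namespace IsOutClosedEmbedding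

lemma reaches_map (hf : IsOutClosedEmbedding A B f) (h : Reaches A u v) :
    Reaches B (f u) (f v) :=
  Relation.ReflTransGen.lift (p := fun a b => (a, b) ∈ B) f (fun a b => (hf.mem_iff a b).mpr)
    _ _ h

lemma exists_eq_of_reaches (hf : IsOutClosedEmbedding A B f) {w : W} (h : Reaches B (f u) w) :
    ∃ v, f v = w ∧ Reaches A u v := by
  induction h with
  | refl => exact ⟨u, rfl, .refl⟩
  | tail _ hw ih =>
    obtain ⟨v, rfl, huv⟩ := ih
    obtain ⟨v', rfl⟩ := hf.exists_eq_of_mem _ _ hw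
    exact ⟨v', rfl, huv.tail ((hf.mem_iff _ _).mp hw)⟩

lemma reaches_iff (hf : IsOutClosedEmbedding A B f) : Reaches B (f u) (f v) ↔ Reaches A u v :=
  ⟨fun h => let ⟨_, hv, huv⟩ := hf.exists_eq_of_reaches h; hf.injective hv ▸ huv,
    hf.reaches_map⟩

lemma outdeg_eq (hf : IsOutClosedEmbedding A B f) (u : V) : outdeg B (f u) = outdeg A u := by
  have : {w | (f u, w) ∈ B} = f '' {v | (u, v) ∈ A} := by
    ext w
    constructor
    · intro hw
      obtain ⟨v, rfl⟩ := hf.exists_eq_of_mem _ _ hw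
      exact ⟨v, (hf.mem_iff _ _).mp hw, rfl⟩
    · rintro ⟨v, hv, rfl⟩
      exact (hf.mem_iff _ _).mpr hv
  rw [outdeg, outdeg, this, Set.ncard_image_of_injective _ hf.injective]

lemma acyclic (hf : IsOutClosedEmbedding A B f) (hB : Acyclic B) : Acyclic A :=
  fun u v huv hvu => hB _ _ ((hf.mem_iff u v).mpr huv) (hf.reaches_map hvu)

lemma not_reaches_of_mem {w : W} (hf : IsOutClosedEmbedding A B f) (hA : Acyclic A)
    (h : (f u, w) ∈ B) : ¬ Reaches B w (f u) := fun hwu => by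
  obtain ⟨v, rfl⟩ := hf.exists_eq_of_mem _ _ h
  exact hA u v ((hf.mem_iff u v).mp h) (hf.reaches_iff.mp hwu)

lemma leafInjective (hf : IsOutClosedEmbedding A B f) (hinj : LeafInjective B lab')
    (hlab : ∀ v, lab' (f v) = lab v) : LeafInjective A lab := fun u v hu hv huv =>
  hf.injective (hinj _ _ ((hf.outdeg_eq u).trans hu) ((hf.outdeg_eq v).trans hv)
    (by rw [hlab, hlab, huv]))

lemma cluster_eq (hf : IsOutClosedEmbedding A B f) (hlab : ∀ v, lab' (f v) = lab v) (m : V) :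
    cluster B lab' (f m) = cluster A lab m := by
  ext x
  constructor
  · rintro ⟨_, hw, hmw, rfl⟩
    obtain ⟨v, rfl, hmv⟩ := hf.exists_eq_of_reaches hmw
    exact ⟨v, (hf.outdeg_eq v).symm.trans hw, hmv, (hlab v).symm⟩
  · rintro ⟨v, hv, hmv, rfl⟩
    exact ⟨f v, (hf.outdeg_eq v).trans hv, hf.reaches_map hmv, hlab v⟩

lemma treeConsistentTriplet [Finite V] [Finite W] (hf : IsOutClosedEmbedding A B f)
    (hA : IsTreeArcs A) (hB : IsTreeArcs B) (hinj : LeafInjective A lab)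
    (hlab : ∀ v, lab' (f v) = lab v) (h : TreeConsistentTriplet A lab x y z) :
    TreeConsistentTriplet B lab' x y z := by
  obtain ⟨hxy, ⟨c, hc, rfl⟩, m, hx, hy, hz⟩ :=
    hA.exists_cluster_of_treeConsistentTriplet hinj h
  rw [← hf.cluster_eq hlab] at hx hy hz
  exact hB.treeConsistentTriplet_of_cluster hxy ⟨f c, (hf.outdeg_eq c).trans hc, hlab c⟩
    hx hy hz

end IsOutClosedEmbedding

end Embedding

section Subtree

variable {A : Set (V × V)} {lab : V → L} {T' : Set (L × L × L)}

def subtreeArcs (A : Set (V × V)) (c : V) :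
    Set ({v // Reaches A c v} × {v // Reaches A c v}) :=
  {p | (p.1.1, p.2.1) ∈ A}

lemma isOutClosedEmbedding_subtreeArcs (A : Set (V × V)) (c : V) :
    IsOutClosedEmbedding (subtreeArcs A c) A Subtype.val :=
  ⟨Subtype.val_injective, fun _ _ => Iff.rfl, fun u w h => ⟨⟨w, u.2.tail h⟩, rfl⟩⟩

variable [Finite V]

lemma IsTreeArcs.subtree (hA : IsTreeArcs A) (c : V) : IsTreeArcs (subtreeArcs A c) := by
  have hf := isOutClosedEmbedding_subtreeArcs A c
  refine isTreeArcs_iff.mpr ⟨hf.acyclic hA.1,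
    ⟨⟨c, .refl⟩, fun u hu => hA.1 _ _ hu u.2, ?_⟩,
    fun v u hu w hw => Subtype.val_injective (hA.eq_of_mem_of_mem hu hw),
    fun v => hf.outdeg_eq v ▸ hA.2.2.2 v⟩
  intro v hv
  rcases Relation.ReflTransGen.cases_tail v.2 with h | ⟨u, hcu, huv⟩
  · exact Subtype.ext h
  · exact absurd huv (hv ⟨u, hcu⟩)

lemma IsTreeArcs.compatibleOn_cluster (hA : IsTreeArcs A) (hinj : LeafInjective A lab) (c : V)
    (hT' : ∀ t ∈ T', TreeConsistentTriplet A lab t.1 t.2.1 t.2.2) :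
    CompatibleOn (restrictT T' (cluster A lab c)) (cluster A lab c) := by
  have hf := isOutClosedEmbedding_subtreeArcs A c
  have hcl (v) : cluster A lab v.1 = cluster (subtreeArcs A c) (lab ∘ Subtype.val) v :=
    hf.cluster_eq (fun _ => rfl) v
  have hleaf : treeLeafSet (subtreeArcs A c) (lab ∘ Subtype.val) = cluster A lab c := by
    rw [treeLeafSet_eq_cluster (r := ⟨c, .refl⟩) fun v => hf.reaches_iff.mp v.2, ← hcl]
  refine ⟨_, inferInstance, subtreeArcs A c, lab ∘ Subtype.val, hA.subtree c,
    hf.leafInjective hinj fun _ => rfl, hleaf, ?_⟩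
  rintro ⟨x, y, z⟩ ⟨ht, hx, -, hz⟩
  obtain ⟨hxy, -, m, hxm, hym, hzm⟩ :=
    hA.exists_cluster_of_treeConsistentTriplet hinj (hT' _ ht)
  by_cases hcm : Reaches A c m
  · rw [hcl ⟨m, hcm⟩] at hxm hym hzm
    exact (hA.subtree c).treeConsistentTriplet_of_cluster hxy (hleaf ▸ hz) hxm hym hzm
  · rcases hA.reaches_total_of_mem_cluster hinj hx hxm with h | h
    · exact absurd h hcm
    · exact absurd (cluster_subset_of_reaches h hz) hzm

end Subtree

section Join

variable {V₁ V₂ : Type} {A₁ : Set (V₁ × V₁)} {A₂ : Set (V₂ × V₂)} {r₁ : V₁}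
  {r₂ : V₂}

/-- Arcs of the tree with a new root `none` above the roots `r₁` and `r₂`. -/
def JoinArc (A₁ : Set (V₁ × V₁)) (A₂ : Set (V₂ × V₂)) (r₁ : V₁) (r₂ : V₂) :
    Option (V₁ ⊕ V₂) → Option (V₁ ⊕ V₂) → Prop
  | some (.inl u), some (.inl v) => (u, v) ∈ A₁
  | some (.inr u), some (.inr v) => (u, v) ∈ A₂
  | none, some (.inl v) => v = r₁
  | none, some (.inr v) => v = r₂
  | _, _ => False

def joinArcs (A₁ : Set (V₁ × V₁)) (A₂ : Set (V₂ × V₂)) (r₁ : V₁) (r₂ : V₂) :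
    Set (Option (V₁ ⊕ V₂) × Option (V₁ ⊕ V₂)) :=
  {p | JoinArc A₁ A₂ r₁ r₂ p.1 p.2}

lemma isOutClosedEmbedding_inl :
    IsOutClosedEmbedding A₁ (joinArcs A₁ A₂ r₁ r₂) (some ∘ Sum.inl) :=
  ⟨(Option.some_injective _).comp Sum.inl_injective, fun _ _ => Iff.rfl, fun _ w h =>
    match w, h with
    | some (.inl v), _ => ⟨v, rfl⟩
    | none, h | some (.inr _), h => False.elim h⟩

lemma isOutClosedEmbedding_inr :
    IsOutClosedEmbedding A₂ (joinArcs A₁ A₂ r₁ r₂) (some ∘ Sum.inr) :=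
  ⟨(Option.some_injective _).comp Sum.inr_injective, fun _ _ => Iff.rfl, fun _ w h =>
    match w, h with
    | some (.inr v), _ => ⟨v, rfl⟩
    | none, h | some (.inl _), h => False.elim h⟩

lemma joinArcs_none :
    {w | (none, w) ∈ joinArcs A₁ A₂ r₁ r₂} = {some (.inl r₁), some (.inr r₂)} := by
  ext (_ | w | w) <;> simp [joinArcs, JoinArc]

lemma outdeg_joinArcs_none : outdeg (joinArcs A₁ A₂ r₁ r₂) none = 2 := by
  rw [outdeg, joinArcs_none, Set.ncard_pair (by simp)]

lemma IsTreeArcs.join [Finite V₁] [Finite V₂] (h₁ : IsTreeArcs A₁) (h₂ : IsTreeArcs A₂)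
    (hr₁ : ∀ u, (u, r₁) ∉ A₁) (hr₂ : ∀ u, (u, r₂) ∉ A₂) :
    IsTreeArcs (joinArcs A₁ A₂ r₁ r₂) := by
  have hf₁ := isOutClosedEmbedding_inl (A₁ := A₁) (A₂ := A₂) (r₁ := r₁) (r₂ := r₂)
  have hf₂ := isOutClosedEmbedding_inr (A₁ := A₁) (A₂ := A₂) (r₁ := r₁) (r₂ := r₂)
  refine isTreeArcs_iff.mpr ⟨?_, ⟨none, fun u h => ?_, ?_⟩, ?_, ?_⟩
  · rintro (_ | u | u) w huw hwu
    · rcases w with _ | w | w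
      · exact huw
      · obtain ⟨_, h, -⟩ := hf₁.exists_eq_of_reaches hwu
        exact Option.some_ne_none _ h
      · obtain ⟨_, h, -⟩ := hf₂.exists_eq_of_reaches hwu
        exact Option.some_ne_none _ h
    · exact hf₁.not_reaches_of_mem h₁.1 huw hwu
    · exact hf₂.not_reaches_of_mem h₂.1 huw hwu
  · rcases u with _ | _ | _ <;> exact h
  · rintro (_ | v | v) hv
    · rfl
    · by_cases hvr : v = r₁
      · exact absurd hvr (hv none)
      · obtain ⟨u, hu⟩ := h₁.exists_parent hr₁ hvr
        exact absurd hu (hv (some (.inl u)))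
    · by_cases hvr : v = r₂
      · exact absurd hvr (hv none)
      · obtain ⟨u, hu⟩ := h₂.exists_parent hr₂ hvr
        exact absurd hu (hv (some (.inr u)))
  · rintro (_ | v | v) (_ | u | u) hu (_ | w | w) hw <;>
      simp only [joinArcs, JoinArc, Set.mem_ofPred_eq] at hu hw
    all_goals first
      | rfl
      | exact hu.elim
      | exact hw.elim
      | exact absurd (hu ▸ hw) (hr₁ _)
      | exact absurd (hw ▸ hu) (hr₁ _)
      | exact absurd (hu ▸ hw) (hr₂ _)
      | exact absurd (hw ▸ hu) (hr₂ _)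
      | rw [h₁.eq_of_mem_of_mem hu hw]
      | rw [h₂.eq_of_mem_of_mem hu hw]
  · rintro (_ | v | v)
    · exact .inr outdeg_joinArcs_none
    · exact hf₁.outdeg_eq v ▸ h₁.2.2.2 v
    · exact hf₂.outdeg_eq v ▸ h₂.2.2.2 v

def crossTriplets (S₁ S₂ : Set L) : Set (L × L × L) :=
  {t | t.1 ∈ S₁ ∧ t.2.1 ∈ S₁ ∧ t.1 ≠ t.2.1 ∧ t.2.2 ∈ S₂}

lemma CompatibleOn.join {T₁ T₂ : Set (L × L × L)} {S₁ S₂ : Set L}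
    (h₁ : CompatibleOn T₁ S₁) (h₂ : CompatibleOn T₂ S₂) (hS : Disjoint S₁ S₂) :
    CompatibleOn (T₁ ∪ T₂ ∪ crossTriplets S₁ S₂ ∪ crossTriplets S₂ S₁)
      (S₁ ∪ S₂) := by
  obtain ⟨V₁, _, A₁, lab₁, hA₁, hinj₁, rfl, hT₁⟩ := h₁
  obtain ⟨V₂, _, A₂, lab₂, hA₂, hinj₂, rfl, hT₂⟩ := h₂
  obtain ⟨r₁, hr₁, hr₁v⟩ := hA₁.exists_root
  obtain ⟨r₂, hr₂, hr₂v⟩ := hA₂.exists_root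
  have hJ := hA₁.join hA₂ hr₁ hr₂
  have hf₁ := isOutClosedEmbedding_inl (A₁ := A₁) (A₂ := A₂) (r₁ := r₁) (r₂ := r₂)
  have hf₂ := isOutClosedEmbedding_inr (A₁ := A₁) (A₂ := A₂) (r₁ := r₁) (r₂ := r₂)
  -- the label of the new root `none` is irrelevant: it is not a leaf
  let lab : Option (V₁ ⊕ V₂) → L := fun w => w.elim (lab₁ r₁) (Sum.elim lab₁ lab₂)
  have hcl₁ : cluster _ lab (some (.inl r₁)) = treeLeafSet A₁ lab₁ :=
    (hf₁.cluster_eq (fun _ => rfl) r₁).trans (treeLeafSet_eq_cluster hr₁v).symm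
  have hcl₂ : cluster _ lab (some (.inr r₂)) = treeLeafSet A₂ lab₂ :=
    (hf₂.cluster_eq (fun _ => rfl) r₂).trans (treeLeafSet_eq_cluster hr₂v).symm
  have hleaf : treeLeafSet (joinArcs A₁ A₂ r₁ r₂) lab =
      treeLeafSet A₁ lab₁ ∪ treeLeafSet A₂ lab₂ := by
    have hroot : ∀ w, Reaches (joinArcs A₁ A₂ r₁ r₂) none w := by
      rintro (_ | v | v)
      · exact .refl
      · exact .head (show (none, some (.inl r₁)) ∈ joinArcs A₁ A₂ r₁ r₂ from rfl)
          (hf₁.reaches_map (hr₁v v))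
      · exact .head (show (none, some (.inr r₂)) ∈ joinArcs A₁ A₂ r₁ r₂ from rfl)
          (hf₂.reaches_map (hr₂v v))
    rw [treeLeafSet_eq_cluster hroot, cluster_eq_union joinArcs_none, hcl₁, hcl₂]
  refine ⟨_, inferInstance, joinArcs A₁ A₂ r₁ r₂, lab, hJ, ?_, hleaf, ?_⟩
  · have hnone : outdeg (joinArcs A₁ A₂ r₁ r₂) none ≠ 0 := by
      rw [outdeg_joinArcs_none]; decide
    rintro (_ | u | u) (_ | v | v) hu hv huv
    all_goals first
      | rfl
      | exact absurd hu hnone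
      | exact absurd hv hnone
      | skip
    · rw [hinj₁ u v ((hf₁.outdeg_eq u).symm.trans hu) ((hf₁.outdeg_eq v).symm.trans hv) huv]
    · exact Set.disjoint_left.mp hS ⟨u, (hf₁.outdeg_eq u).symm.trans hu, rfl⟩
        ⟨v, (hf₂.outdeg_eq v).symm.trans hv, huv.symm⟩ |>.elim
    · exact Set.disjoint_left.mp hS ⟨v, (hf₁.outdeg_eq v).symm.trans hv, huv.symm⟩
        ⟨u, (hf₂.outdeg_eq u).symm.trans hu, rfl⟩ |>.elim
    · rw [hinj₂ u v ((hf₂.outdeg_eq u).symm.trans hu) ((hf₂.outdeg_eq v).symm.trans hv) huv]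
  · rintro t (((ht | ht) | ⟨hx, hy, hxy, hz⟩) | ⟨hx, hy, hxy, hz⟩)
    · exact hf₁.treeConsistentTriplet hA₁ hJ hinj₁ (fun _ => rfl) (hT₁ t ht)
    · exact hf₂.treeConsistentTriplet hA₂ hJ hinj₂ (fun _ => rfl) (hT₂ t ht)
    · exact hJ.treeConsistentTriplet_of_cluster hxy (hleaf ▸ .inr hz) (hcl₁ ▸ hx)
        (hcl₁ ▸ hy) (hcl₁ ▸ Set.disjoint_right.mp hS hz)
    · exact hJ.treeConsistentTriplet_of_cluster hxy (hleaf ▸ .inl hz) (hcl₂ ▸ hx)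
        (hcl₂ ▸ hy) (hcl₂ ▸ Set.disjoint_left.mp hS hz)

end Join

section SNSets

variable {T : Set (L × L × L)} {S S' S₁ S₂ : Set L} {x y z : L}

lemma restrictT_restrictT (h : S' ⊆ S) : restrictT (restrictT T S) S' = restrictT T S' :=
  Set.ext fun _ => ⟨fun ht => ⟨ht.1.1, ht.2⟩,
    fun ht => ⟨⟨ht.1, h ht.2.1, h ht.2.2.1, h ht.2.2.2⟩, ht.2⟩⟩

lemma IsTripletSet.swap_mem_restrictT (hT : IsTripletSet T) (h : (x, y, z) ∈ restrictT T S) :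
    (y, x, z) ∈ restrictT T S :=
  ⟨(hT _ h.1).1, h.2.2.1, h.2.1, h.2.2.2⟩

lemma DenseT.mem_restrictT (hdense : DenseT T) (hSL : S ⊆ tripletLeaves T) (hx : x ∈ S)
    (hy : y ∈ S) (hz : z ∈ S) (hxy : x ≠ y) (hxz : x ≠ z) (hyz : y ≠ z) :
    (x, y, z) ∈ restrictT T S ∨ (x, z, y) ∈ restrictT T S ∨
      (y, z, x) ∈ restrictT T S := by
  rcases hdense x (hSL hx) y (hSL hy) z (hSL hz) hxy hxz hyz with h | h | h
  · exact .inl ⟨h, hx, hy, hz⟩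
  · exact .inr (.inl ⟨h, hx, hz, hy⟩)
  · exact .inr (.inr ⟨h, hy, hz, hx⟩)

lemma SNSetOn.snSet (h : SNSetOn (restrictT T S) S S') (hS : SNSet T S) : SNSet T S' := by
  refine ⟨h.1.trans hS.1, ?_⟩
  rintro ⟨x, y, z, hxyz, hx, hz, hy⟩
  by_cases hyS : y ∈ S
  · exact h.2 ⟨x, y, z, ⟨hxyz, h.1 hx, hyS, h.1 hz⟩, hx, hz, hy⟩
  · exact hS.2 ⟨x, y, z, hxyz, h.1 hx, h.1 hz, hyS⟩

lemma snSetOn_singleton (hT : IsTripletSet T) (hx : x ∈ S) : SNSetOn (restrictT T S) S {x} := by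
  refine ⟨Set.singleton_subset_iff.mpr hx, ?_⟩
  rintro ⟨a, b, c, habc, rfl, rfl, -⟩
  exact (hT _ habc.1).2.2.1 rfl

lemma SNSetOn.subset_or_subset (hT : IsTripletSet T) (hdense : DenseT T)
    (hSL : S ⊆ tripletLeaves T) (h₁ : SNSetOn (restrictT T S) S S₁)
    (h₂ : SNSetOn (restrictT T S) S S₂) (hx₁ : x ∈ S₁) (hx₂ : x ∈ S₂) :
    S₁ ⊆ S₂ ∨ S₂ ⊆ S₁ := by
  by_contra hc
  obtain ⟨a, ha₁, ha₂⟩ := Set.not_subset.mp (not_or.mp hc).1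
  obtain ⟨b, hb₂, hb₁⟩ := Set.not_subset.mp (not_or.mp hc).2
  rcases hdense.mem_restrictT hSL (h₁.1 ha₁) (h₂.1 hb₂) (h₁.1 hx₁)
    (fun h => ha₂ (h ▸ hb₂)) (fun h => ha₂ (h ▸ hx₂)) (fun h => hb₁ (h ▸ hx₁))
    with h | h | h
  · exact h₁.2 ⟨a, b, x, h, ha₁, hx₁, hb₁⟩
  · exact h₂.2 ⟨x, a, b, hT.swap_mem_restrictT h, hx₂, hb₂, ha₂⟩
  · exact h₁.2 ⟨x, b, a, hT.swap_mem_restrictT h, hx₁, ha₁, hb₁⟩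

lemma exists_maxProperSN_superset (hfin : S.Finite) (h : SNSetOn (restrictT T S) S S')
    (hne : S' ≠ S) : ∃ M, MaxProperSN T S M ∧ S' ⊆ M := by
  have hfam : {M | SNSetOn (restrictT T S) S M ∧ M ≠ S}.Finite :=
    hfin.finite_subsets.subset fun M hM => hM.1.1
  obtain ⟨M, hS'M, hM⟩ := hfam.exists_le_maximal (a := S') ⟨h, hne⟩
  exact ⟨M, ⟨hM.1.1, hM.1.2, fun S'' h'' hne'' hsub =>
    (hM.2 ⟨h'', hne''⟩ hsub).antisymm hsub⟩, hS'M⟩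

structure IsCompatibleSplit (T : Set (L × L × L)) (S S₁ S₂ : Set L) : Prop where
  disjoint : Disjoint S₁ S₂
  union_eq : S₁ ∪ S₂ = S
  notMem : ∀ x ∈ S₁, ∀ y ∈ S₂, ∀ z ∈ S, (x, y, z) ∉ T

namespace IsCompatibleSplit

lemma symm (hT : IsTripletSet T) (h : IsCompatibleSplit T S S₁ S₂) :
    IsCompatibleSplit T S S₂ S₁ :=
  ⟨h.disjoint.symm, Set.union_comm S₂ S₁ ▸ h.union_eq,
    fun x hx y hy z hz hxyz => h.notMem y hy x hx z hz (hT _ hxyz).1⟩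

lemma snSetOn_left (h : IsCompatibleSplit T S S₁ S₂) : SNSetOn (restrictT T S) S S₁ := by
  refine ⟨h.union_eq ▸ Set.subset_union_left, ?_⟩
  rintro ⟨x, y, z, ⟨hxyz, -, hy, hz⟩, hx, -, hy₁⟩
  rw [← h.union_eq] at hy
  exact h.notMem x hx y (hy.resolve_left hy₁) z hz hxyz

lemma left_ne (h : IsCompatibleSplit T S S₁ S₂) (h₂ : S₂.Nonempty) : S₁ ≠ S := by
  rintro rfl
  obtain ⟨y, hy⟩ := h₂
  exact Set.disjoint_right.mp h.disjoint hy (h.union_eq ▸ Or.inr hy)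

lemma subset_or_subset (hdense : DenseT T) (hSL : S ⊆ tripletLeaves T)
    (h : IsCompatibleSplit T S S₁ S₂) (hS' : SNSetOn (restrictT T S) S S') (hne : S' ≠ S) :
    S' ⊆ S₁ ∨ S' ⊆ S₂ := by
  by_contra hc
  obtain ⟨x, hx, hx₁⟩ := Set.not_subset.mp (not_or.mp hc).1
  obtain ⟨y, hy, hy₂⟩ := Set.not_subset.mp (not_or.mp hc).2
  obtain ⟨z, hz, hzS'⟩ := Set.exists_of_ssubset (hS'.1.ssubset_of_ne hne)
  have hS := h.union_eq
  have hx₂ : x ∈ S₂ := ((hS ▸ hS'.1 hx : x ∈ S₁ ∪ S₂)).resolve_left hx₁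
  have hy₁ : y ∈ S₁ := ((hS ▸ hS'.1 hy : y ∈ S₁ ∪ S₂)).resolve_right hy₂
  rcases hdense.mem_restrictT hSL (hS'.1 hy) (hS'.1 hx) hz
    (fun e => Set.disjoint_left.mp h.disjoint hy₁ (e ▸ hx₂)) (fun e => hzS' (e ▸ hy))
    (fun e => hzS' (e ▸ hx)) with ht | ht | ht
  · exact h.notMem y hy₁ x hx₂ z hz ht.1
  · exact hS'.2 ⟨y, z, x, ht, hy, hx, hzS'⟩
  · exact hS'.2 ⟨x, z, y, ht, hx, hy, hzS'⟩

lemma maxProperSN_left (hdense : DenseT T) (hSL : S ⊆ tripletLeaves T)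
    (h : IsCompatibleSplit T S S₁ S₂) (h₁ : S₁.Nonempty) (h₂ : S₂.Nonempty) :
    MaxProperSN T S S₁ := by
  refine ⟨h.snSetOn_left, h.left_ne h₂, fun S'' h'' hne'' hsub => ?_⟩
  rcases h.subset_or_subset hdense hSL h'' hne'' with h' | h'
  · exact h'.antisymm hsub
  · obtain ⟨x, hx⟩ := h₁
    exact absurd (h' (hsub hx)) (Set.disjoint_left.mp h.disjoint hx)

lemma maxProperSN (hT : IsTripletSet T) (hdense : DenseT T) (hSL : S ⊆ tripletLeaves T)
    (h : IsCompatibleSplit T S S₁ S₂) (h₁ : S₁.Nonempty) (h₂ : S₂.Nonempty) :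
    S₁ ≠ S₂ ∧ MaxProperSN T S S₁ ∧ MaxProperSN T S S₂ ∧
      ∀ S', MaxProperSN T S S' → S' = S₁ ∨ S' = S₂ := by
  refine ⟨fun h₁₂ => ?_, h.maxProperSN_left hdense hSL h₁ h₂,
    (h.symm hT).maxProperSN_left hdense hSL h₂ h₁, fun S' hS' => ?_⟩
  · obtain ⟨x, hx⟩ := h₁
    exact Set.disjoint_left.mp h.disjoint hx (h₁₂ ▸ hx)
  · rcases h.subset_or_subset hdense hSL hS'.1 hS'.2.1 with h' | h'
    · exact .inl (hS'.2.2 S₁ h.snSetOn_left (h.left_ne h₂) h').symm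
    · exact .inr (hS'.2.2 S₂ (h.symm hT).snSetOn_left ((h.symm hT).left_ne h₁) h').symm

lemma restrictT_subset (hT : IsTripletSet T) (h : IsCompatibleSplit T S S₁ S₂) :
    restrictT T S ⊆
      restrictT T S₁ ∪ restrictT T S₂ ∪ crossTriplets S₁ S₂ ∪
        crossTriplets S₂ S₁ := by
  rintro ⟨x, y, z⟩ ⟨hxyz, hx, hy, hz⟩
  have hxy : x ≠ y := (hT _ hxyz).2.1
  rw [← h.union_eq] at hx hy
  rcases hx with hx | hx <;> rcases hy with hy | hy
  · rcases h.union_eq ▸ hz with hz | hz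
    · exact .inl (.inl (.inl ⟨hxyz, hx, hy, hz⟩))
    · exact .inl (.inr ⟨hx, hy, hxy, hz⟩)
  · exact absurd hxyz (h.notMem x hx y hy z hz)
  · exact absurd (hT _ hxyz).1 (h.notMem y hy x hx z hz)
  · rcases h.union_eq ▸ hz with hz | hz
    · exact .inr ⟨hx, hy, hxy, hz⟩
    · exact .inl (.inl (.inr ⟨hxyz, hx, hy, hz⟩))

end IsCompatibleSplit

lemma isCompatibleSplit_of_maxProperSN (hT : IsTripletSet T) (hdense : DenseT T)
    (hSL : S ⊆ tripletLeaves T) (hfin : S.Finite) (h₁ : MaxProperSN T S S₁)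
    (h₂ : MaxProperSN T S S₂) (hne : S₁ ≠ S₂)
    (huniq : ∀ S', MaxProperSN T S S' → S' = S₁ ∨ S' = S₂) :
    IsCompatibleSplit T S S₁ S₂ := by
  have hdisj : Disjoint S₁ S₂ := Set.disjoint_left.mpr fun x hx₁ hx₂ => by
    rcases h₁.1.subset_or_subset hT hdense hSL h₂.1 hx₁ hx₂ with h | h
    · exact hne (h₁.2.2 S₂ h₂.1 h₂.2.1 h).symm
    · exact hne (h₂.2.2 S₁ h₁.1 h₁.2.1 h)
  have hcover : S ⊆ S₁ ∪ S₂ := fun x hx => by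
    have hsing : {x} ≠ S := by
      rintro rfl
      have hempty {M : Set L} (hM : MaxProperSN T {x} M) : M = ∅ :=
        (Set.subset_singleton_iff_eq.mp hM.1.1).resolve_right hM.2.1
      exact hne ((hempty h₁).trans (hempty h₂).symm)
    obtain ⟨M, hM, hxM⟩ := exists_maxProperSN_superset hfin (snSetOn_singleton hT hx) hsing
    rcases huniq M hM with rfl | rfl
    exacts [.inl (hxM rfl), .inr (hxM rfl)]
  refine ⟨hdisj, (Set.union_subset h₁.1.1 h₂.1.1).antisymm hcover, ?_⟩
  intro x hx y hy z hz hxyz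
  have ht : (x, y, z) ∈ restrictT T S := ⟨hxyz, h₁.1.1 hx, h₂.1.1 hy, hz⟩
  rcases hcover hz with hz | hz
  · exact h₁.1.2 ⟨x, y, z, ht, hx, hz, Set.disjoint_right.mp hdisj hy⟩
  · exact h₂.1.2 ⟨y, x, z, hT.swap_mem_restrictT ht, hy, hz, Set.disjoint_left.mp hdisj hx⟩

end SNSets

lemma CompatibleOn.exists_isCompatibleSplit {T : Set (L × L × L)} {S : Set L}
    (h : CompatibleOn (restrictT T S) S) (hS : S.ncard ≠ 1) :
    ∃ S₁ S₂, S₁.Nonempty ∧ S₂.Nonempty ∧ IsCompatibleSplit T S S₁ S₂ ∧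
      CompatibleOn (restrictT T S₁) S₁ ∧ CompatibleOn (restrictT T S₂) S₂ := by
  obtain ⟨V, _, A, lab, hA, hinj, rfl, hcons⟩ := h
  obtain ⟨r, -, hr⟩ := hA.exists_root
  rcases hA.2.2.2 r with hr0 | hr2
  · exact absurd (Set.ncard_eq_one.mpr ⟨lab r, treeLeafSet_eq_singleton hr hr0⟩) hS
  obtain ⟨c₁, c₂, hc, hchildren⟩ := Set.ncard_eq_two.mp hr2
  have hc₁ : (r, c₁) ∈ A := show c₁ ∈ {w | (r, w) ∈ A} from hchildren ▸ .inl rfl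
  have hc₂ : (r, c₂) ∈ A := show c₂ ∈ {w | (r, w) ∈ A} from hchildren ▸ .inr rfl
  have hunion : cluster A lab c₁ ∪ cluster A lab c₂ = treeLeafSet A lab := by
    rw [treeLeafSet_eq_cluster hr, cluster_eq_union hchildren]
  have hdisj : Disjoint (cluster A lab c₁) (cluster A lab c₂) :=
    Set.disjoint_left.mpr fun x h₁ h₂ => (hA.reaches_total_of_mem_cluster hinj h₁ h₂).elim
      (hA.not_reaches_of_siblings hc₁ hc₂ hc) (hA.not_reaches_of_siblings hc₂ hc₁ hc.symm)
  have hsub₁ := hunion ▸ Set.subset_union_left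
  have hsub₂ := hunion ▸ Set.subset_union_right
  refine ⟨_, _, hA.1.cluster_nonempty c₁, hA.1.cluster_nonempty c₂, ⟨hdisj, hunion, ?_⟩,
    restrictT_restrictT hsub₁ ▸ hA.compatibleOn_cluster hinj c₁ hcons,
    restrictT_restrictT hsub₂ ▸ hA.compatibleOn_cluster hinj c₂ hcons⟩
  intro x hx y hy z hz hxyz
  obtain ⟨-, -, m, hxm, hym, hzm⟩ :=
    hA.exists_cluster_of_treeConsistentTriplet hinj (hcons _ ⟨hxyz, hsub₁ hx, hsub₂ hy, hz⟩)
  -- the cluster of `m` meets both halves, so it contains both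
  have h₁ : Reaches A m c₁ := (hA.reaches_total_of_mem_cluster hinj hxm hx).resolve_right
    fun h => Set.disjoint_right.mp hdisj hy (cluster_subset_of_reaches h hym)
  have h₂ : Reaches A m c₂ := (hA.reaches_total_of_mem_cluster hinj hym hy).resolve_right
    fun h => Set.disjoint_left.mp hdisj hx (cluster_subset_of_reaches h hxm)
  rw [← hunion] at hz
  exact hzm (hz.elim (cluster_subset_of_reaches h₁ ·) (cluster_subset_of_reaches h₂ ·))

/-- Let `T` be a dense triplet set.  An SN-set `S` of `T` is a
CandidateTBR SN-set (i.e. `T|S` is consistent with some phylogenetic tree) if and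
only if `|S| = 1`, or `S` has exactly two SN-subsets maximal under the restriction
of being nontrivial subsets of `S`, both of which are CandidateTBR SN-sets. -/
theorem candidateTBR_characterisation (L : Type) (T : Set (L × L × L))
    (hT : IsTripletSet T) (hfin : (tripletLeaves T).Finite) (hdense : DenseT T)
    (S : Set L) (hS : SNSet T S) :
    CandidateTBR T S ↔
      (S.ncard = 1 ∨
        ∃ S₁ S₂ : Set L, S₁ ≠ S₂ ∧ MaxProperSN T S S₁ ∧ MaxProperSN T S S₂ ∧
          (∀ S', MaxProperSN T S S' → S' = S₁ ∨ S' = S₂) ∧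
          CandidateTBR T S₁ ∧ CandidateTBR T S₂) := by
  simp only [candidateTBR_iff, hS, true_and]
  constructor
  · intro hcomp
    refine or_iff_not_imp_left.mpr fun h1 => ?_
    obtain ⟨S₁, S₂, hne₁, hne₂, hsplit, hc₁, hc₂⟩ :=
      hcomp.exists_isCompatibleSplit h1
    obtain ⟨hne, hm₁, hm₂, huniq⟩ := hsplit.maxProperSN hT hdense hS.1 hne₁ hne₂
    exact ⟨S₁, S₂, hne, hm₁, hm₂, huniq, ⟨hm₁.1.snSet hS, hc₁⟩,
      ⟨hm₂.1.snSet hS, hc₂⟩⟩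
  · rintro (h1 | ⟨S₁, S₂, hne, hm₁, hm₂, huniq, ⟨-, hc₁⟩, ⟨-, hc₂⟩⟩)
    · obtain ⟨x, rfl⟩ := Set.ncard_eq_one.mp h1
      exact (compatibleOn_singleton x).mono fun t ht => (hT t ht.1).2.1 (ht.2.1.trans ht.2.2.1.symm)
    · have hsplit :=
        isCompatibleSplit_of_maxProperSN hT hdense hS.1 (hfin.subset hS.1) hm₁ hm₂ hne huniq
      have h := (hc₁.join hc₂ hsplit.disjoint).mono (hsplit.restrictT_subset hT)
      rwa [hsplit.union_eq] at h

end Phylo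
end

section
/- Let n ≥ 3 be odd and let T be the triplet set on leaves {1,…,n} consisting of all triplets ab|c with a > c and b > c (a ≠ b), together with the triplets a(a+1)|n for each odd a with 1 ≤ a ≤ n−2. Then T is dense and there exists a level-1 network consistent with T that contains exactly one reticulation vertex. -/
/-!
Common definitions for formalizing "Constructing the Simplest Possible
Phylogenetic Network from Triplets" (van Iersel, Kelk).

A directed graph on a vertex type `V` is given by its arc set `A : Set (V × V)`.
-/

namespace Phylo

variable {V L : Type}

/-- The triplet set of Section 2: all triplets `ab|c` on `{1,…,n}` with `a,b > c`
(`a ≠ b`), together with the triplets `a(a+1)|n` for odd `a` with `1 ≤ a ≤ n-2`. -/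
def exampleT (n : ℕ) : Set (ℕ × ℕ × ℕ) :=
  {t | 1 ≤ t.1 ∧ t.1 ≤ n ∧ 1 ≤ t.2.1 ∧ t.2.1 ≤ n ∧ 1 ≤ t.2.2 ∧ t.2.2 ≤ n ∧
       t.1 ≠ t.2.1 ∧ t.2.2 < t.1 ∧ t.2.2 < t.2.1} ∪
  {t | ∃ a, Odd a ∧ 1 ≤ a ∧ a ≤ n - 2 ∧ t = (a, a + 1, n)}

/-!
The network is the path `0 → 1 → ⋯ → n` closed into a cycle by the arc `0 → n`, with a leaf `i`
hanging below every cycle vertex `i ≥ 1`; its only reticulation is `n`. A triplet `xy|z` with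
`z < x < y` is displayed with summit `z` and cherry vertex `x` on the spine, and `a(a+1)|n`
with summit the root, whose second path runs through the reticulation to the leaf `n`. The
cycle is the only biconnected component with more than two vertices, because a pendant leaf lies
in no biconnected set of three vertices; it has `n ≥ 3` outgoing arcs. Density holds because
any three leaves carry the triplet separating off the smallest of them.
-/

section Digraph

variable {A : Set (V × V)}

theorem acyclic_of_forall_lt {α : Type*} [Preorder α] (f : V → α)
    (h : ∀ u v, (u, v) ∈ A → f u < f v) : Acyclic A := by
  have reaches_le : ∀ {u v}, Reaches A u v → f u ≤ f v := fun huv => by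
    induction huv with
    | refl => exact le_rfl
    | tail _ hbc ih => exact ih.trans (h _ _ hbc).le
  exact fun u v huv hvu => (h u v huv).not_ge (reaches_le hvu)

theorem IsPathFromTo.isEndpoint_left {l : List V} {u v : V} (h : IsPathFromTo A l u v) :
    IsEndpoint l u :=
  Or.inl h.2.1

theorem IsPathFromTo.isEndpoint_right {l : List V} {u v : V} (h : IsPathFromTo A l u v) :
    IsEndpoint l v :=
  Or.inr h.2.2

theorem isPathFromTo_singleton (v : V) : IsPathFromTo A [v] v v :=
  ⟨⟨List.cons_ne_nil _ _, List.nodup_singleton v, List.isChain_singleton v⟩, rfl, rfl⟩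

theorem IsPathFromTo.append {l l' : List V} {u v v' w : V} (h : IsPathFromTo A l u v)
    (h' : IsPathFromTo A l' v' w) (hvv' : (v, v') ∈ A) (hdisj : ∀ x ∈ l, x ∉ l') :
    IsPathFromTo A (l ++ l') u w := by
  obtain ⟨⟨hne, hnd, hch⟩, hhead, hlast⟩ := h
  obtain ⟨⟨hne', hnd', hch'⟩, hhead', hlast'⟩ := h'
  refine ⟨⟨by simp [hne], List.nodup_append.2 ⟨hnd, hnd', ?_⟩,
    List.isChain_append.2 ⟨hch, hch', ?_⟩⟩, by simp [hhead], by simp [hlast']⟩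
  · rintro x hx _ hy rfl
    exact hdisj x hx hy
  · simp_all

theorem IntDisjoint.symm {p q : List V} (h : IntDisjoint p q) : IntDisjoint q p :=
  fun w hq hp => (h w hp hq).symm

theorem intDisjoint_of_forall_notMem {p q : List V} (h : ∀ w ∈ p, w ∉ q) : IntDisjoint p q :=
  fun w hp hq => absurd hq (h w hp)

theorem intDisjoint_of_forall_eq {p q : List V} {x : V} (h : ∀ w ∈ p, w ∈ q → w = x)
    (hp : IsEndpoint p x) (hq : IsEndpoint q x) : IntDisjoint p q := by
  intro w hwp hwq
  obtain rfl := h w hwp hwq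
  exact ⟨hp, hq⟩

theorem HasEmbedding.swap {p q x y z : V} (h : HasEmbedding A p q x y z) :
    HasEmbedding A p q y x z := by
  obtain ⟨hpq, Pqx, Pqy, Ppq, Ppz, hx, hy, hq, hz, hxy, hxq, hxz, hyq, hyz, hqz⟩ := h
  exact ⟨hpq, Pqy, Pqx, Ppq, Ppz, hy, hx, hq, hz, hxy.symm, hyq, hyz, hxq, hxz, hqz⟩

/-- `ConnWithin A S` is connectivity under this relation. -/
def inducedAdj (A : Set (V × V)) (S : Set V) (a b : V) : Prop := a ∈ S ∧ b ∈ S ∧ UAdj A a b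

instance {S : Set V} : Std.Symm (inducedAdj A S) :=
  ⟨fun _ _ ⟨ha, hb, hab⟩ => ⟨hb, ha, hab.symm⟩⟩

theorem connWithin_of_forall_reflTransGen {S : Set V} (b : V)
    (h : ∀ u ∈ S, Relation.ReflTransGen (inducedAdj A S) u b) : ConnWithin A S :=
  fun u hu v hv => (h u hu).trans (Std.Symm.symm _ _ (h v hv))

theorem ConnWithin.eq_of_forall_uAdj {T : Set V} {u v : V} (hT : ConnWithin A T) (hv : v ∈ T)
    (hiso : ∀ w ∈ T, UAdj A v w → w = v) (hu : u ∈ T) : u = v := by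
  have hvu := hT v hv u hu
  clear hu
  induction hvu with
  | refl => rfl
  | tail _ hbc ih => exact hiso _ hbc.2.1 (ih ▸ hbc.2.2)

theorem Biconnected.notMem_of_forall_uAdj_eq {S : Set V} {c v : V} (hS : Biconnected A S)
    (hS3 : 3 ≤ S.ncard) (hcv : c ≠ v) (hv : ∀ u, UAdj A v u → u = c) : v ∉ S := by
  intro hvS
  obtain ⟨-, hconn, hdel⟩ := hS
  have hT : ConnWithin A (S \ {c}) ∧ 1 < (S \ {c}).ncard := by
    by_cases hc : c ∈ S
    · rw [Set.ncard_sdiff_singleton_of_mem hc]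
      exact ⟨hdel c hc, by omega⟩
    · rw [Set.sdiff_singleton_eq_self hc]
      exact ⟨hconn, by omega⟩
  obtain ⟨u, hu, huv⟩ := Set.exists_ne_of_one_lt_ncard hT.2 v
  exact huv (hT.1.eq_of_forall_uAdj ⟨hvS, hcv.symm⟩ (fun w hw h => absurd (hv w h) hw.2) hu)

end Digraph

theorem isLevel_of_numRetic_le {N : PhyloNetwork V L} {k : ℕ} (h : numRetic N ≤ k) :
    IsLevel N k := fun S _ => by
  have := N.vfin
  exact (Set.ncard_le_ncard (fun v hv => hv.2) (Set.toFinite _)).trans h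

section ExampleTriplets

variable {n : ℕ}

theorem mem_exampleT {x y z : ℕ} : (x, y, z) ∈ exampleT n ↔
    (1 ≤ x ∧ x ≤ n ∧ 1 ≤ y ∧ y ≤ n ∧ 1 ≤ z ∧ z ≤ n ∧ x ≠ y ∧ z < x ∧ z < y) ∨
      (Odd x ∧ 1 ≤ x ∧ x ≤ n - 2 ∧ y = x + 1 ∧ z = n) := by
  simp only [exampleT, Set.mem_union, Set.mem_ofPred_eq, Prod.mk.injEq]
  constructor
  · rintro (h | ⟨a, ha, h1, h2, rfl, rfl, rfl⟩)
    exacts [.inl h, .inr ⟨ha, h1, h2, rfl, rfl⟩]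
  · rintro (h | ⟨ha, h1, h2, rfl, rfl⟩)
    exacts [.inl h, .inr ⟨x, ha, h1, h2, rfl, rfl, rfl⟩]

theorem mem_exampleT_of_lt {x y z : ℕ} (hz : 1 ≤ z) (hx : x ≤ n) (hy : y ≤ n) (hxy : x ≠ y)
    (hzx : z < x) (hzy : z < y) : (x, y, z) ∈ exampleT n :=
  mem_exampleT.2 (.inl ⟨by omega, hx, by omega, hy, hz, by omega, hxy, hzx, hzy⟩)

theorem tripletLeaves_exampleT (hn : 3 ≤ n) : tripletLeaves (exampleT n) = Set.Icc 1 n := by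
  ext x
  rw [Set.mem_Icc]
  constructor
  · rintro ⟨⟨a, b, c⟩, ht, hx⟩
    rw [mem_exampleT] at ht
    dsimp only at hx
    omega
  · rintro ⟨hx1, hxn⟩
    rcases (by omega : x = 1 ∨ x = 2 ∨ 3 ≤ x) with rfl | rfl | hx3
    · exact ⟨(2, 3, 1), mem_exampleT_of_lt le_rfl (by omega) hn (by omega) (by omega) (by omega),
        .inr (.inr rfl)⟩
    · exact ⟨(2, 3, 1), mem_exampleT_of_lt le_rfl (by omega) hn (by omega) (by omega) (by omega),
        .inl rfl⟩
    · exact ⟨(x, 2, 1), mem_exampleT_of_lt le_rfl hxn (by omega) (by omega) (by omega) (by omega),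
        .inl rfl⟩

theorem denseT_exampleT (hn : 3 ≤ n) : DenseT (exampleT n) := by
  simp only [DenseT, tripletLeaves_exampleT hn, Set.mem_Icc]
  intro x hx y hy z hz hxy hxz hyz
  rcases (by omega : (z < x ∧ z < y) ∨ (y < x ∧ y < z) ∨ (x < y ∧ x < z)) with h | h | h
  · exact .inl (mem_exampleT_of_lt hz.1 hx.2 hy.2 hxy h.1 h.2)
  · exact .inr (.inl (mem_exampleT_of_lt hy.1 hx.2 hz.2 hxz h.1 h.2))
  · exact .inr (.inr (mem_exampleT_of_lt hx.1 hy.2 hz.2 hyz h.1 h.2))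

end ExampleTriplets

section ExampleNetwork

variable {n : ℕ}

open Fin.NatCast

abbrev Vtx (n : ℕ) : Type := Fin (2 * n + 1)

/-- Vertex `0` is the root, `1, …, n - 1` are split vertices, `n` is the reticulation (with
parents `0` and `n - 1`), and `n + i` is the leaf hanging below `i`. -/
def exampleArc (n i j : ℕ) : Prop :=
  (i < n ∧ j = i + 1) ∨ (i = 0 ∧ j = n) ∨ (1 ≤ i ∧ i ≤ n ∧ j = n + i)

def exampleArcs (n : ℕ) : Set (Vtx n × Vtx n) := {p | exampleArc n p.1 p.2}

theorem val_natCast_vtx {k : ℕ} (hk : k ≤ 2 * n) : ((k : Vtx n) : ℕ) = k :=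
  Fin.val_cast_of_lt (by omega)

theorem natCast_vtx_inj {j k : ℕ} (hj : j ≤ 2 * n) (hk : k ≤ 2 * n) :
    (j : Vtx n) = k ↔ j = k := by
  rw [Fin.ext_iff, val_natCast_vtx hj, val_natCast_vtx hk]

theorem eq_natCast_vtx_iff {v : Vtx n} {k : ℕ} (hk : k ≤ 2 * n) : v = k ↔ v.val = k := by
  rw [Fin.ext_iff, val_natCast_vtx hk]

theorem natCast_mem_exampleArcs {i j : ℕ} (hj : j ≤ 2 * n) (h : exampleArc n i j) :
    ((i : Vtx n), (j : Vtx n)) ∈ exampleArcs n := by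
  have hi : i ≤ 2 * n := by unfold exampleArc at h; omega
  simpa only [exampleArcs, Set.mem_ofPred_eq, val_natCast_vtx hi, val_natCast_vtx hj] using h

theorem exampleArc.lt (hn : 0 < n) {i j : ℕ} (h : exampleArc n i j) : i < j := by
  unfold exampleArc at h
  omega

theorem acyclic_exampleArcs (hn : 0 < n) : Acyclic (exampleArcs n) :=
  acyclic_of_forall_lt Fin.val fun _ _ h => exampleArc.lt hn h

theorem indeg_exampleArcs (v : Vtx n) :
    indeg (exampleArcs n) v = {i | exampleArc n i v}.ncard :=
  Set.ncard_preimage_of_injective_subset_range Fin.val_injective fun i (h : exampleArc n i v) => by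
    rw [Fin.range_val]
    unfold exampleArc at h
    have := v.isLt
    exact Set.mem_Iio.2 (by omega)

theorem outdeg_exampleArcs (v : Vtx n) :
    outdeg (exampleArcs n) v = {j | exampleArc n v j}.ncard :=
  Set.ncard_preimage_of_injective_subset_range Fin.val_injective fun j (h : exampleArc n v j) => by
    rw [Fin.range_val]
    unfold exampleArc at h
    have := v.isLt
    exact Set.mem_Iio.2 (by omega)

theorem exampleArcs_vertex_type (hn : 3 ≤ n) (v : Vtx n) :
    (v.val = 0 ∧ IsRoot (exampleArcs n) v) ∨
      (0 < v.val ∧ v.val < n ∧ IsSplit (exampleArcs n) v) ∨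
      (v.val = n ∧ IsRetic (exampleArcs n) v) ∨ (n < v.val ∧ IsLeafV (exampleArcs n) v) := by
  obtain ⟨k, hk⟩ := v
  simp only [IsRoot, IsSplit, IsRetic, IsLeafV, indeg_exampleArcs, outdeg_exampleArcs]
  rcases (by omega : k = 0 ∨ (0 < k ∧ k < n) ∨ k = n ∨ n < k) with h | h | h | h
  · have hin : {i | exampleArc n i k} = ∅ :=
      Set.eq_empty_of_forall_notMem fun i (hi : exampleArc n i k) => by
        unfold exampleArc at hi; omega
    have hout : {j | exampleArc n k j} = {1, n} := by
      ext; simp only [Set.mem_ofPred_eq, Set.mem_insert_iff, Set.mem_singleton_iff, exampleArc]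
      omega
    exact Or.inl ⟨h, by rw [hin, Set.ncard_empty], by rw [hout, Set.ncard_pair (by omega)]⟩
  · have hin : {i | exampleArc n i k} = {k - 1} := by
      ext; simp only [Set.mem_ofPred_eq, Set.mem_singleton_iff, exampleArc]
      omega
    have hout : {j | exampleArc n k j} = {k + 1, n + k} := by
      ext; simp only [Set.mem_ofPred_eq, Set.mem_insert_iff, Set.mem_singleton_iff, exampleArc]
      omega
    exact Or.inr <| Or.inl ⟨h.1, h.2, by rw [hin, Set.ncard_singleton],
      by rw [hout, Set.ncard_pair (by omega)]⟩
  · have hin : {i | exampleArc n i k} = {0, n - 1} := by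
      ext; simp only [Set.mem_ofPred_eq, Set.mem_insert_iff, Set.mem_singleton_iff, exampleArc]
      omega
    have hout : {j | exampleArc n k j} = {2 * n} := by
      ext; simp only [Set.mem_ofPred_eq, Set.mem_singleton_iff, exampleArc]
      omega
    exact Or.inr <| Or.inr <| Or.inl ⟨h, by rw [hin, Set.ncard_pair (by omega)],
      by rw [hout, Set.ncard_singleton]⟩
  · have hin : {i | exampleArc n i k} = {k - n} := by
      ext; simp only [Set.mem_ofPred_eq, Set.mem_singleton_iff, exampleArc]
      omega
    have hout : {j | exampleArc n k j} = ∅ :=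
      Set.eq_empty_of_forall_notMem fun j (hj : exampleArc n k j) => by
        unfold exampleArc at hj; omega
    exact Or.inr <| Or.inr <| Or.inr ⟨h, by rw [hin, Set.ncard_singleton],
      by rw [hout, Set.ncard_empty]⟩

theorem isRoot_exampleArcs_iff (hn : 3 ≤ n) (v : Vtx n) :
    IsRoot (exampleArcs n) v ↔ v.val = 0 := by
  rcases exampleArcs_vertex_type hn v with ⟨hv, h⟩ | ⟨hv, hv', h⟩ | ⟨hv, h⟩ | ⟨hv, h⟩ <;>
    simp only [IsRoot, IsSplit, IsRetic, IsLeafV] at h ⊢ <;> omega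

theorem isRetic_exampleArcs_iff (hn : 3 ≤ n) (v : Vtx n) :
    IsRetic (exampleArcs n) v ↔ v.val = n := by
  rcases exampleArcs_vertex_type hn v with ⟨hv, h⟩ | ⟨hv, hv', h⟩ | ⟨hv, h⟩ | ⟨hv, h⟩ <;>
    simp only [IsRoot, IsSplit, IsRetic, IsLeafV] at h ⊢ <;> omega

theorem isLeafV_exampleArcs_iff (hn : 3 ≤ n) (v : Vtx n) :
    IsLeafV (exampleArcs n) v ↔ n < v.val := by
  rcases exampleArcs_vertex_type hn v with ⟨hv, h⟩ | ⟨hv, hv', h⟩ | ⟨hv, h⟩ | ⟨hv, h⟩ <;>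
    simp only [IsRoot, IsSplit, IsRetic, IsLeafV] at h ⊢ <;> omega

def spinePath (n s t : ℕ) : List (Vtx n) := (List.range' s (t + 1 - s)).map (↑)

def leafPath (n s t : ℕ) : List (Vtx n) := spinePath n s t ++ [((n + t : ℕ) : Vtx n)]

theorem mem_spinePath {s t : ℕ} (ht : t ≤ 2 * n) {w : Vtx n} :
    w ∈ spinePath n s t ↔ s ≤ w.val ∧ w.val ≤ t := by
  simp only [spinePath, List.mem_map, List.mem_range'_1]
  constructor
  · rintro ⟨k, hk, rfl⟩
    rw [val_natCast_vtx (by omega)]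
    omega
  · exact fun hw => ⟨w.val, by omega, Fin.cast_val_eq_self w⟩

theorem mem_leafPath {s t : ℕ} (ht : t ≤ n) {w : Vtx n} :
    w ∈ leafPath n s t ↔ (s ≤ w.val ∧ w.val ≤ t) ∨ w.val = n + t := by
  rw [leafPath, List.mem_append, mem_spinePath (by omega), List.mem_singleton,
    eq_natCast_vtx_iff (by omega)]

theorem isPathFromTo_spinePath {s t : ℕ} (hst : s ≤ t) (ht : t ≤ n) :
    IsPathFromTo (exampleArcs n) (spinePath n s t) s t := by
  refine ⟨⟨by simp only [spinePath, ne_eq, List.map_eq_nil_iff, List.range'_eq_nil_iff]; omega,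
    ?_, ?_⟩, ?_, ?_⟩
  · refine (List.nodup_range' (s := s)).map_on fun a ha b hb hab => ?_
    rw [List.mem_range'_1] at ha hb
    rwa [← val_natCast_vtx (n := n) (k := a) (by omega), ← val_natCast_vtx (n := n) (k := b)
      (by omega), Fin.val_inj]
  · change List.IsChain _ _
    rw [spinePath, List.isChain_map]
    refine (List.isChain_range' s _ 1).imp_of_mem_imp fun a b _ hb hab => ?_
    rw [List.mem_range'_1] at hb
    exact natCast_mem_exampleArcs (by omega) (Or.inl ⟨by omega, hab⟩)
  · simp only [spinePath, List.head?_map, List.head?_range']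
    rw [if_neg (by omega)]
    rfl
  · simp only [spinePath, List.getLast?_map, List.getLast?_range']
    rw [if_neg (by omega), show s + (t + 1 - s) - 1 = t by omega]
    rfl

theorem isPathFromTo_leafPath {s t : ℕ} (hst : s ≤ t) (ht : 1 ≤ t) (htn : t ≤ n) :
    IsPathFromTo (exampleArcs n) (leafPath n s t) s (n + t : ℕ) := by
  refine (isPathFromTo_spinePath hst htn).append (isPathFromTo_singleton _)
    (natCast_mem_exampleArcs (by omega) (Or.inr (Or.inr ⟨ht, htn, rfl⟩))) fun x hx => ?_
  rw [mem_spinePath (by omega)] at hx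
  rw [List.mem_singleton, eq_natCast_vtx_iff (by omega)]
  omega

/-- Summit `s` and cherry vertex `x` both lie on the spine; `P` is the path from the summit to
the third leaf, which must leave the spine at once and avoid the leaves `x` and `y`. -/
theorem hasEmbedding_exampleArcs {s x y c : ℕ} {P : List (Vtx n)} (hsx : s < x) (hxy : x < y)
    (hyn : y ≤ n) (hP : IsPathFromTo (exampleArcs n) P s c)
    (hPs : ∀ w ∈ P, w.val ≠ s → y < w.val ∧ w.val ≠ n + x ∧ w.val ≠ n + y) :
    HasEmbedding (exampleArcs n) s x (n + x : ℕ) (n + y : ℕ) c := by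
  have hPx := isPathFromTo_leafPath (n := n) le_rfl (by omega) (by omega : x ≤ n)
  have hPy := isPathFromTo_leafPath (n := n) hxy.le (by omega) hyn
  have hPq := isPathFromTo_spinePath (n := n) hsx.le (by omega : x ≤ n)
  have hcherry : ∀ {l l' : List (Vtx n)}, (∀ w ∈ l, w ∈ l' → w.val = x) →
      IsEndpoint l (x : Vtx n) → IsEndpoint l' (x : Vtx n) → IntDisjoint l l' := fun h hl hl' =>
    intDisjoint_of_forall_eq (fun w h₁ h₂ => (eq_natCast_vtx_iff (by omega)).2 (h w h₁ h₂)) hl hl'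
  have hoff : ∀ {t}, t = x ∨ t = y → IntDisjoint (leafPath n x t) P := fun ht =>
    intDisjoint_of_forall_notMem fun w hw hwP => by
      have := hPs w hwP
      rw [mem_leafPath (by omega)] at hw
      omega
  refine ⟨?_, _, _, _, P, hPx, hPy, hPq, hP, ?_, ?_, hoff (.inl rfl), ?_, hoff (.inr rfl),
    intDisjoint_of_forall_eq (fun w h₁ h₂ => ?_) hPq.isEndpoint_left hP.isEndpoint_left⟩
  · rw [Ne, natCast_vtx_inj (by omega) (by omega)]
    omega
  · refine hcherry (fun w h₁ h₂ => ?_) hPx.isEndpoint_left hPy.isEndpoint_left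
    rw [mem_leafPath (by omega)] at h₁ h₂
    omega
  · refine hcherry (fun w h₁ h₂ => ?_) hPx.isEndpoint_left hPq.isEndpoint_right
    rw [mem_leafPath (by omega)] at h₁
    rw [mem_spinePath (by omega)] at h₂
    omega
  · refine hcherry (fun w h₁ h₂ => ?_) hPy.isEndpoint_left hPq.isEndpoint_right
    rw [mem_leafPath (by omega)] at h₁
    rw [mem_spinePath (by omega)] at h₂
    omega
  · have := hPs w h₂
    rw [mem_spinePath (by omega)] at h₁
    rw [eq_natCast_vtx_iff (by omega)]
    omega

def cycleVerts (n : ℕ) : Set (Vtx n) := {v | v.val ≤ n}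

theorem natCast_mem_cycleVerts {k : ℕ} (hk : k ≤ n) : (k : Vtx n) ∈ cycleVerts n := by
  show ((k : Vtx n) : ℕ) ≤ n
  rw [val_natCast_vtx (by omega)]
  exact hk

theorem reflTransGen_spine {S : Set (Vtx n)} {i j : ℕ} (hij : i ≤ j) (hjn : j ≤ n)
    (hS : ∀ k, i ≤ k → k ≤ j → (k : Vtx n) ∈ S) :
    Relation.ReflTransGen (inducedAdj (exampleArcs n) S) (i : Vtx n) (j : Vtx n) := by
  refine (reflTransGen_of_succ_of_le (fun a b : ℕ => inducedAdj (exampleArcs n) S a b)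
    (fun k hk => ?_) hij).lift _ fun _ _ h => h
  rw [Set.mem_Ico] at hk
  rw [Order.succ_eq_add_one]
  exact ⟨hS k (by omega) (by omega), hS (k + 1) (by omega) (by omega),
    Or.inl (natCast_mem_exampleArcs (by omega) (Or.inl ⟨by omega, rfl⟩))⟩

theorem connWithin_cycleVerts : ConnWithin (exampleArcs n) (cycleVerts n) :=
  connWithin_of_forall_reflTransGen ((0 : ℕ) : Vtx n) fun u (hu : u.val ≤ n) => by
    have := reflTransGen_spine (Nat.zero_le _) hu fun k _ hk =>
      natCast_mem_cycleVerts (hk.trans hu)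
    rw [Fin.cast_val_eq_self] at this
    exact Std.Symm.symm _ _ this

theorem connWithin_cycleVerts_sdiff (hn : 0 < n) (w : Vtx n) :
    ConnWithin (exampleArcs n) (cycleVerts n \ {w}) := by
  have hspine : ∀ {i j : ℕ}, i ≤ j → j ≤ n → (w.val < i ∨ j < w.val) →
      Relation.ReflTransGen (inducedAdj (exampleArcs n) (cycleVerts n \ {w})) i j :=
    fun hij hjn hw => reflTransGen_spine hij hjn fun k hik hkj =>
      ⟨natCast_mem_cycleVerts (by omega), fun h => by
        rw [Set.mem_singleton_iff, eq_comm, eq_natCast_vtx_iff (by omega)] at h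
        omega⟩
  by_cases hw : w.val = 0
  · refine connWithin_of_forall_reflTransGen ((1 : ℕ) : Vtx n) fun u ⟨(hu : u.val ≤ n), huw⟩ => ?_
    have hne : u.val ≠ w.val := fun h => huw (Fin.ext h)
    have := hspine (i := 1) (j := u.val) (by omega) hu (by omega)
    rw [Fin.cast_val_eq_self] at this
    exact Std.Symm.symm _ _ this
  · refine connWithin_of_forall_reflTransGen ((0 : ℕ) : Vtx n) fun u ⟨(hu : u.val ≤ n), huw⟩ => ?_
    have hne : u.val ≠ w.val := fun h => huw (Fin.ext h)
    rcases Nat.lt_or_gt_of_ne hne with hlt | hgt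
    · have := hspine (i := 0) (j := u.val) (by omega) hu (by omega)
      rw [Fin.cast_val_eq_self] at this
      exact Std.Symm.symm _ _ this
    · -- around the other side of the cycle, through the arc `0 → n`
      have := hspine (i := u.val) (j := n) hu le_rfl (by omega)
      rw [Fin.cast_val_eq_self] at this
      refine this.tail ⟨⟨natCast_mem_cycleVerts le_rfl, fun h => ?_⟩,
        ⟨natCast_mem_cycleVerts (by omega), fun h => ?_⟩,
        Or.inr (natCast_mem_exampleArcs (by omega) (Or.inr (Or.inl ⟨rfl, rfl⟩)))⟩ <;>
      · rw [Set.mem_singleton_iff, eq_comm, eq_natCast_vtx_iff (by omega)] at h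
        omega

theorem biconnected_cycleVerts (hn : 0 < n) : Biconnected (exampleArcs n) (cycleVerts n) := by
  refine ⟨?_, connWithin_cycleVerts, fun w _ => connWithin_cycleVerts_sdiff hn w⟩
  have : 1 < (cycleVerts n).ncard := (Set.one_lt_ncard_iff (Set.toFinite _)).2
    ⟨(0 : ℕ), (1 : ℕ), natCast_mem_cycleVerts (by omega), natCast_mem_cycleVerts hn, by
      rw [Ne, natCast_vtx_inj (by omega) (by omega)]
      omega⟩
  omega

theorem subset_cycleVerts_of_biconnected (hn : 0 < n) {S : Set (Vtx n)}
    (hS : Biconnected (exampleArcs n) S) (hS3 : 3 ≤ S.ncard) : S ⊆ cycleVerts n := by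
  intro v hv
  by_contra hvc
  have hnv : n < v.val := not_le.1 hvc
  have := v.isLt
  refine hS.notMem_of_forall_uAdj_eq hS3 (c := ((v.val - n : ℕ) : Vtx n)) (fun h => ?_)
    (fun u hu => ?_) hv
  · rw [eq_comm, eq_natCast_vtx_iff (by omega)] at h
    omega
  · rw [eq_natCast_vtx_iff (by omega)]
    rcases hu with (h : exampleArc n v u) | (h : exampleArc n u v) <;> unfold exampleArc at h <;>
      omega

theorem two_lt_ncard_outArcs_cycleVerts (hn : 3 ≤ n) :
    2 < (outArcs (exampleArcs n) (cycleVerts n)).ncard := by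
  have hout : ∀ i, 1 ≤ i → i ≤ n →
      ((i : Vtx n), ((n + i : ℕ) : Vtx n)) ∈ outArcs (exampleArcs n) (cycleVerts n) :=
    fun i h1 h2 => ⟨natCast_mem_exampleArcs (by omega) (Or.inr (Or.inr ⟨h1, h2, rfl⟩)),
      natCast_mem_cycleVerts h2, by
        show ¬ ((n + i : ℕ) : Vtx n).val ≤ n
        rw [val_natCast_vtx (by omega)]
        omega⟩
  have hne : ∀ i j, i ≤ n → j ≤ n → i ≠ j →
      ((i : Vtx n), ((n + i : ℕ) : Vtx n)) ≠ ((j : Vtx n), ((n + j : ℕ) : Vtx n)) :=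
    fun i j hi hj hij h => hij ((natCast_vtx_inj (by omega) (by omega)).1 (Prod.ext_iff.1 h).1)
  exact (Set.two_lt_ncard_iff (Set.toFinite _)).2 ⟨_, _, _, hout 1 le_rfl (by omega),
    hout 2 (by omega) (by omega), hout 3 (by omega) hn, hne 1 2 (by omega) (by omega) (by omega),
    hne 1 3 (by omega) hn (by omega), hne 2 3 (by omega) hn (by omega)⟩

theorem bicomp_out_exampleArcs (hn : 3 ≤ n) (S : Set (Vtx n)) (hS : BiconnComp (exampleArcs n) S)
    (hS2 : S.ncard ≠ 2) : 3 ≤ (outArcs (exampleArcs n) S).ncard := by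
  have hS3 : 3 ≤ S.ncard := by
    have := hS.1.1
    omega
  obtain rfl : cycleVerts n = S :=
    hS.2 _ (biconnected_cycleVerts (by omega))
      (subset_cycleVerts_of_biconnected (by omega) hS.1 hS3)
  exact two_lt_ncard_outArcs_cycleVerts hn

def exampleNet (n : ℕ) (hn : 3 ≤ n) : PhyloNetwork (Vtx n) ℕ where
  vfin := inferInstance
  arcs := exampleArcs n
  lab v := v.val - n
  acyclic := acyclic_exampleArcs (by omega)
  root_ex := ⟨0, (isRoot_exampleArcs_iff hn 0).2 rfl⟩
  root_unique r r' h h' := Fin.ext <|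
    ((isRoot_exampleArcs_iff hn r).1 h).trans ((isRoot_exampleArcs_iff hn r').1 h').symm
  vertex_type v := by
    rcases exampleArcs_vertex_type hn v with ⟨-, h⟩ | ⟨-, -, h⟩ | ⟨-, h⟩ | ⟨-, h⟩
    exacts [.inl h, .inr (.inl h), .inr (.inr (.inl h)), .inr (.inr (.inr h))]
  lab_inj u v hu hv (huv : u.val - n = v.val - n) := by
    rw [isLeafV_exampleArcs_iff hn] at hu hv
    exact Fin.ext (by omega)
  bicomp_out := bicomp_out_exampleArcs hn

theorem exampleNet_arcs (hn : 3 ≤ n) : (exampleNet n hn).arcs = exampleArcs n := rfl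

theorem isLeafV_exampleNet {hn : 3 ≤ n} {x : ℕ} (hx1 : 1 ≤ x) (hxn : x ≤ n) :
    IsLeafV (exampleNet n hn).arcs ((n + x : ℕ) : Vtx n) ∧
      (exampleNet n hn).lab ((n + x : ℕ) : Vtx n) = x := by
  have hval := val_natCast_vtx (n := n) (k := n + x) (by omega)
  refine ⟨(isLeafV_exampleArcs_iff hn _).2 (by omega), ?_⟩
  show ((n + x : ℕ) : Vtx n).val - n = x
  omega

theorem consistentT_exampleNet {hn : 3 ≤ n} {x y z : ℕ} (hx : x ∈ Set.Icc 1 n)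
    (hy : y ∈ Set.Icc 1 n) (hz : z ∈ Set.Icc 1 n) (hxy : x ≠ y) (hxz : x ≠ z) (hyz : y ≠ z)
    (h : ∃ p q, HasEmbedding (exampleArcs n) p q (n + x : ℕ) (n + y : ℕ) (n + z : ℕ)) :
    ConsistentT (exampleNet n hn) x y z := by
  rw [Set.mem_Icc] at hx hy hz
  obtain ⟨hleaf_x, hlab_x⟩ := isLeafV_exampleNet (hn := hn) hx.1 hx.2
  obtain ⟨hleaf_y, hlab_y⟩ := isLeafV_exampleNet (hn := hn) hy.1 hy.2
  obtain ⟨hleaf_z, hlab_z⟩ := isLeafV_exampleNet (hn := hn) hz.1 hz.2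
  refine ⟨_, _, _, hleaf_x, hleaf_y, hleaf_z, hlab_x, hlab_y, hlab_z, ?_, ?_, ?_, h⟩ <;>
  · rw [Ne, natCast_vtx_inj (by omega) (by omega)]
    omega

theorem numRetic_exampleNet (hn : 3 ≤ n) : numRetic (exampleNet n hn) = 1 := by
  have : {v | IsRetic (exampleNet n hn).arcs v} = {(n : Vtx n)} := by
    ext v
    rw [Set.mem_ofPred_eq, exampleNet_arcs, isRetic_exampleArcs_iff hn, Set.mem_singleton_iff,
      eq_natCast_vtx_iff (by omega)]
  rw [numRetic, this, Set.ncard_singleton]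

theorem leafSet_exampleNet (hn : 3 ≤ n) :
    leafSet (exampleNet n hn) = tripletLeaves (exampleT n) := by
  rw [tripletLeaves_exampleT hn]
  ext x
  constructor
  · rintro ⟨v, hv, rfl⟩
    rw [exampleNet_arcs, isLeafV_exampleArcs_iff hn] at hv
    have := v.isLt
    exact ⟨show 1 ≤ v.val - n by omega, show v.val - n ≤ n by omega⟩
  · rintro ⟨hx1, hxn⟩
    exact ⟨_, isLeafV_exampleNet hx1 hxn⟩

theorem consistentSet_exampleNet (hn : 3 ≤ n) : ConsistentSet (exampleNet n hn) (exampleT n) := by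
  rintro ⟨x, y, z⟩ ht
  show ConsistentT _ x y z
  rcases mem_exampleT.1 ht with
    ⟨hx1, hxn, hy1, hyn, hz1, hzn, hxy, hzx, hzy⟩ | ⟨-, hx1, hxn, rfl, hz⟩
  · refine consistentT_exampleNet ⟨hx1, hxn⟩ ⟨hy1, hyn⟩ ⟨hz1, hzn⟩ hxy (by omega) (by omega) ?_
    have hP := isPathFromTo_leafPath (n := n) le_rfl hz1 hzn
    have hPs : ∀ w ∈ leafPath n z z, w.val ≠ z → w.val = n + z := fun w hw hwz => by
      rw [mem_leafPath hzn] at hw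
      omega
    rcases Nat.lt_or_gt_of_ne hxy with h | h
    · exact ⟨_, _, hasEmbedding_exampleArcs hzx h hyn hP fun w hw hwz => by
        have := hPs w hw hwz; omega⟩
    · exact ⟨_, _, (hasEmbedding_exampleArcs hzy h hxn hP fun w hw hwz => by
        have := hPs w hw hwz; omega).swap⟩
  · subst z
    refine consistentT_exampleNet ⟨hx1, by omega⟩ ⟨by omega, by omega⟩ ⟨by omega, le_rfl⟩
      (by omega) (by omega) (by omega) ?_
    have hP : IsPathFromTo (exampleArcs n) ([((0 : ℕ) : Vtx n)] ++ leafPath n n n) (0 : ℕ)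
        (n + n : ℕ) :=
      (isPathFromTo_singleton _).append (isPathFromTo_leafPath le_rfl (by omega) le_rfl)
        (natCast_mem_exampleArcs (by omega) (.inr (.inl ⟨rfl, rfl⟩))) fun w hw hw' => by
          rw [List.mem_singleton, eq_natCast_vtx_iff (by omega)] at hw
          rw [mem_leafPath le_rfl] at hw'
          omega
    refine ⟨_, _, hasEmbedding_exampleArcs (by omega) (lt_add_one x) (by omega) hP
      fun w hw hw0 => ?_⟩
    rw [List.mem_append, List.mem_singleton, eq_natCast_vtx_iff (by omega),
      mem_leafPath le_rfl] at hw
    omega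

end ExampleNetwork

theorem example_one_reticulation_general (n : ℕ) (h3 : 3 ≤ n) :
    DenseT (exampleT n) ∧
    ∃ (V : Type) (N : PhyloNetwork V ℕ),
      IsLevel N 1 ∧ ConsistentSet N (exampleT n) ∧
      leafSet N = tripletLeaves (exampleT n) ∧ numRetic N = 1 :=
  ⟨denseT_exampleT h3, Vtx n, exampleNet n h3, isLevel_of_numRetic_le (numRetic_exampleNet h3).le,
    consistentSet_exampleNet h3, leafSet_exampleNet h3, numRetic_exampleNet h3⟩

/-- For odd `n ≥ 3` the above triplet set is dense and there is a
level-1 network consistent with it containing exactly one reticulation vertex. -/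
theorem example_one_reticulation (n : ℕ) (hodd : Odd n) (h3 : 3 ≤ n) :
    DenseT (exampleT n) ∧
    ∃ (V : Type) (N : PhyloNetwork V ℕ),
      IsLevel N 1 ∧ ConsistentSet N (exampleT n) ∧
      leafSet N = tripletLeaves (exampleT n) ∧ numRetic N = 1 :=
  example_one_reticulation_general n h3

end Phylo
end
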